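/- arXiv:1206.1727 — 5 statements merged into one kernel-verified Lean document; each statement's English description precedes it below -/
import Mathlib

section
/- For any bounded sequence (x_n) of points in a compactly convex subset X of a locally convex space E and any sequence (λ_n) of non-negative reals with ∑ λ_n = 1, the series ∑ λ_n x_n converges to a point of X. (In other words, every compactly convex subset of a locally convex space is ∞-convex.) -/
open Bornology

/-- A subset `X` of a topological vector space is ∞-convex if for every bounded sequence
`(x n)` in `X` and nonnegative reals `(lam n)` with `∑ lam n = 1`, the series
`∑ lam n • x n` converges to a point of `X`. -/
def IsInftyConvexIn {E : Type*} [AddCommGroup E] [Module ℝ E] [TopologicalSpace E]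
    (X : Set E) : Prop :=
  ∀ x : ℕ → E, (∀ n, x n ∈ X) → IsVonNBounded ℝ (Set.range x) →
    ∀ lam : ℕ → ℝ, (∀ n, 0 ≤ lam n) → HasSum lam 1 →
      ∃ p ∈ X, HasSum (fun n => lam n • x n) p

/-- A subset `X` is compactly convex if for every compact `K ⊆ X` the closed convex hull
of `K` taken inside `X` is compact. -/
def IsCompactlyConvexIn {E : Type*} [AddCommGroup E] [Module ℝ E] [TopologicalSpace E]
    (X : Set E) : Prop :=
  ∀ K : Set E, K ⊆ X → IsCompact K → IsCompact (closure (convexHull ℝ K) ∩ X)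

open Filter Topology Set Pointwise

/-- A sub-convex combination (weights nonnegative, total at most one) of points of a
convex set containing `0` stays in the set. -/
private lemma subconv_mem {E : Type*} [AddCommGroup E] [Module ℝ E] {V : Set E}
    (hV : Convex ℝ V) (h0 : (0 : E) ∈ V) (F : Finset ℕ) (μ : ℕ → ℝ) (v : ℕ → E)
    (hμ0 : ∀ n ∈ F, 0 ≤ μ n) (hμ1 : ∑ n ∈ F, μ n ≤ 1) (hv : ∀ n ∈ F, v n ∈ V) :
    (∑ n ∈ F, μ n • v n) ∈ V := by
  rcases eq_or_lt_of_le (Finset.sum_nonneg hμ0) with h | h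
  · have hz : ∀ n ∈ F, μ n = 0 := (Finset.sum_eq_zero_iff_of_nonneg hμ0).1 h.symm
    have : (∑ n ∈ F, μ n • v n) = 0 := by
      apply Finset.sum_eq_zero
      intro n hn
      rw [hz n hn, zero_smul]
    rw [this]; exact h0
  · set σ : ℝ := ∑ n ∈ F, μ n with hσ
    have hw : ∑ n ∈ F, μ n / σ = 1 := by
      rw [← Finset.sum_div, ← hσ, div_self h.ne']
    have hmem : (∑ n ∈ F, (μ n / σ) • v n) ∈ V :=
      hV.sum_mem (fun n hn => div_nonneg (hμ0 n hn) h.le) hw hv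
    have hcomb := hV h0 hmem (by linarith : (0:ℝ) ≤ 1 - σ) h.le (by ring)
    have : (1 - σ) • (0 : E) + σ • ∑ n ∈ F, (μ n / σ) • v n = ∑ n ∈ F, μ n • v n := by
      rw [smul_zero, zero_add, Finset.smul_sum]
      apply Finset.sum_congr rfl
      intro n _
      rw [smul_smul, mul_div_cancel₀ _ h.ne']
    rwa [this] at hcomb

/-- A sub-convex combination padded with a base point of a convex set stays in the set. -/
private lemma subconv_pad_mem {E : Type*} [AddCommGroup E] [Module ℝ E] {C : Set E}
    (hC : Convex ℝ C) {b : E} (hb : b ∈ C) (F : Finset ℕ) (μ : ℕ → ℝ) (v : ℕ → E)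
    (hμ0 : ∀ n ∈ F, 0 ≤ μ n) (hμ1 : ∑ n ∈ F, μ n ≤ 1) (hv : ∀ n ∈ F, v n ∈ C) :
    (∑ n ∈ F, μ n • v n) + (1 - ∑ n ∈ F, μ n) • b ∈ C := by
  have hC' : Convex ℝ {y : E | y + b ∈ C} := by
    intro y1 h1 y2 h2 p q hp hq hpq
    have := hC h1 h2 hp hq hpq
    have he : p • (y1 + b) + q • (y2 + b) = (p • y1 + q • y2) + b := by
      rw [smul_add, smul_add]
      rw [show p • y1 + p • b + (q • y2 + q • b)
          = (p • y1 + q • y2) + (p • b + q • b) by abel, ← add_smul, hpq, one_smul]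
    rw [he] at this
    exact this
  have h0' : (0 : E) ∈ {y : E | y + b ∈ C} := by simpa using hb
  have hv' : ∀ n ∈ F, v n - b ∈ {y : E | y + b ∈ C} := by
    intro n hn; simpa using hv n hn
  have hmem := subconv_mem hC' h0' F μ (fun n => v n - b) hμ0 hμ1 hv'
  have hmem' : (∑ n ∈ F, μ n • (v n - b)) + b ∈ C := hmem
  have he : (∑ n ∈ F, μ n • (v n - b)) + b
      = (∑ n ∈ F, μ n • v n) + (1 - ∑ n ∈ F, μ n) • b := by
    have h1 : ∑ n ∈ F, μ n • (v n - b) = (∑ n ∈ F, μ n • v n) - (∑ n ∈ F, μ n) • b := by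
      rw [Finset.sum_smul]
      rw [← Finset.sum_sub_distrib]
      apply Finset.sum_congr rfl
      intro n _
      rw [smul_sub]
    rw [h1, sub_smul, one_smul]
    abel
  rwa [he] at hmem'

set_option maxHeartbeats 1000000 in
/-- Every compactly convex subset of a locally convex space is ∞-convex. -/
theorem stmt0 {E : Type*} [AddCommGroup E] [Module ℝ E] [TopologicalSpace E]
    [IsTopologicalAddGroup E] [ContinuousSMul ℝ E] [LocallyConvexSpace ℝ E]
    (X : Set E) (hX : Convex ℝ X) (hcc : IsCompactlyConvexIn X) :
    IsInftyConvexIn X := by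
  classical
  intro x hxX hbdd lam hlam0 hlam1
  -- there is an index with positive weight
  obtain ⟨N0, hN0⟩ : ∃ n, 0 < lam n := by
    by_contra h
    push_neg at h
    have hz : lam = fun _ => 0 := funext fun n => le_antisymm (h n) (hlam0 n)
    rw [hz] at hlam1
    exact one_ne_zero (hasSum_zero.unique hlam1).symm
  set a : E := x N0 with ha
  set lS : ℝ := lam N0 with hlS
  -- partial sums and tails
  have hsum_le : ∀ F : Finset ℕ, ∑ i ∈ F, lam i ≤ 1 :=
    fun F => sum_le_hasSum F (fun i _ => hlam0 i) hlam1
  set t : ℕ → ℝ := fun m => 1 - ∑ i ∈ Finset.range m, lam i with hT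
  have ht0 : ∀ m, 0 ≤ t m := by
    intro m
    have := hsum_le (Finset.range m)
    simp only [hT]
    linarith
  have hts : ∀ m, t m - t (m + 1) = lam m := by
    intro m
    simp only [hT, Finset.sum_range_succ]
    ring
  have htmono : ∀ m, t (m + 1) ≤ t m := by
    intro m
    have := hts m
    have := hlam0 m
    linarith
  have ht_tend : Tendsto t atTop (𝓝 0) := by
    have h1 : Tendsto (fun m => ∑ i ∈ Finset.range m, lam i) atTop (𝓝 1) :=
      hlam1.tendsto_sum_nat
    have h2 : Tendsto (fun m => 1 - ∑ i ∈ Finset.range m, lam i) atTop (𝓝 (1 - 1)) :=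
      tendsto_const_nhds.sub h1
    simpa using h2
  set s : ℕ → ℝ := fun m => Real.sqrt (t m) with hS
  have hsnn : ∀ m, 0 ≤ s m := fun m => Real.sqrt_nonneg _
  have hs_tend : Tendsto s atTop (𝓝 0) := by
    have : Tendsto (fun m => Real.sqrt (t m)) atTop (𝓝 (Real.sqrt 0)) :=
      (Real.continuous_sqrt.continuousAt).tendsto.comp ht_tend
    simpa [Real.sqrt_zero] using this
  have hs0 : s 0 = 1 := by simp [hS, hT]
  have hsmono : ∀ m, s (m + 1) ≤ s m := fun m => Real.sqrt_le_sqrt (htmono m)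
  have hssq : ∀ m, s m * s m = t m := fun m => Real.mul_self_sqrt (ht0 m)
  -- dilution coefficients
  set c : ℕ → ℝ := fun n => (lS / 2) * (s n - s (n + 1)) with hc
  have hc0 : ∀ n, 0 ≤ c n := by
    intro n
    have := hsmono n
    have : 0 ≤ s n - s (n + 1) := by linarith
    have hlS2 : 0 ≤ lS / 2 := by positivity
    exact mul_nonneg hlS2 this
  have hcpos : ∀ n, lam n ≠ 0 → 0 < c n := by
    intro n hn
    have hlamn : 0 < lam n := lt_of_le_of_ne (hlam0 n) (Ne.symm hn)
    have htlt : t (n + 1) < t n := by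
      have := hts n; linarith
    have hslt : s (n + 1) < s n := Real.sqrt_lt_sqrt (ht0 (n + 1)) htlt
    have : 0 < s n - s (n + 1) := by linarith
    positivity
  set ε : ℕ → ℝ := fun n => if lam n = 0 then 0 else lam n / (lam n + c n) with hε
  have hεmem : ∀ n, 0 ≤ ε n ∧ ε n ≤ 1 := by
    intro n
    by_cases hn : lam n = 0
    · simp [hε, hn]
    · have hlamn : 0 < lam n := lt_of_le_of_ne (hlam0 n) (Ne.symm hn)
      have hden : 0 < lam n + c n := by have := hc0 n; linarith
      constructor
      · simp only [hε, if_neg hn]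
        positivity
      · simp only [hε, if_neg hn]
        rw [div_le_one hden]
        have := hc0 n; linarith
  have hε_bound : ∀ n, ε n ≤ 4 / lS * s n := by
    intro n
    by_cases hn : lam n = 0
    · simp only [hε, if_pos hn]
      have := hsnn n
      positivity
    · have hlamn : 0 < lam n := lt_of_le_of_ne (hlam0 n) (Ne.symm hn)
      have hcn : 0 < c n := hcpos n hn
      have hden : 0 < lam n + c n := by linarith
      simp only [hε, if_neg hn]
      rw [div_le_iff₀ hden]
      have hfac : lam n = (s n - s (n + 1)) * (s n + s (n + 1)) := by
        have h1 := hssq n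
        have h2 := hssq (n + 1)
        have h3 := hts n
        nlinarith
      have hs1 : s (n + 1) ≤ s n := hsmono n
      have hs1n : 0 ≤ s (n + 1) := hsnn (n + 1)
      have hsd : 0 < s n - s (n + 1) := by
        have hcn' : 0 < lS / 2 * (s n - s (n + 1)) := hcn
        nlinarith [hN0]
      have hsn0 : 0 < s n := by linarith
      have key : lam n ≤ (4 / lS * s n) * c n := by
        rw [hfac, hc]
        have hlSpos : 0 < lS := hN0
        have e1 : 4 / lS * s n * (lS / 2 * (s n - s (n + 1))) = 2 * s n * (s n - s (n + 1)) := by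
          field_simp; ring
        rw [e1]
        nlinarith
      have : 0 ≤ (4 / lS * s n) * lam n := by positivity
      nlinarith
  have hε_tend : Tendsto ε atTop (𝓝 0) := by
    apply squeeze_zero (fun n => (hεmem n).1) hε_bound
    have := hs_tend.const_mul (4 / lS)
    simpa using this
  -- the compact generating set
  set g : ℕ → E := fun n => ε n • x n + (1 - ε n) • a with hg
  have hgX : ∀ n, g n ∈ X := by
    intro n
    exact hX (hxX n) (hxX N0) (hεmem n).1 (by linarith [(hεmem n).2]) (by ring)
  have hg' : ∀ n, g n = a + ε n • (x n - a) := by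
    intro n
    simp only [hg, smul_sub, sub_smul, one_smul]
    abel
  have hbdd' : IsVonNBounded ℝ (Set.range fun n => x n - a) := by
    have h1 : IsVonNBounded ℝ (Set.range x + {-a}) :=
      hbdd.add (isVonNBounded_singleton (-a))
    apply h1.subset
    rintro y ⟨n, rfl⟩
    exact ⟨x n, Set.mem_range_self n, -a, rfl, (sub_eq_add_neg _ _).symm⟩
  have hg_tend : Tendsto g atTop (𝓝 a) := by
    have h0 : Tendsto (fun n => ε n • (x n - a)) atTop (𝓝 0) :=
      hbdd'.smul_tendsto_zero (Eventually.of_forall fun n => Set.mem_range_self n) hε_tend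
    have h1 : Tendsto (fun n => a + ε n • (x n - a)) atTop (𝓝 (a + 0)) :=
      tendsto_const_nhds.add h0
    rw [add_zero] at h1
    apply h1.congr
    intro n
    exact (hg' n).symm
  set K : Set E := insert a (Set.range g) with hK
  have hKcomp : IsCompact K := hg_tend.isCompact_insert_range
  have hKX : K ⊆ X := by
    rintro y (rfl | ⟨n, rfl⟩)
    · exact hxX N0
    · exact hgX n
  have hD := hcc K hKX hKcomp
  -- the weights
  set w : ℕ → ℝ := fun n => if n = N0 ∨ lam n = 0 then 0 else lam n + c n with hw
  have hw0 : ∀ n, 0 ≤ w n := by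
    intro n
    by_cases hn : n = N0 ∨ lam n = 0
    · simp [hw, hn]
    · simp only [hw, if_neg hn]
      push_neg at hn
      have := hlam0 n; have := hc0 n; linarith
  -- per-term identity
  have hterm : ∀ n, w n • g n = lam n • (x n - a) + w n • a := by
    intro n
    by_cases hn : n = N0 ∨ lam n = 0
    · rcases hn with hn | hn
      · subst hn
        simp [hw, ha, sub_self, smul_zero]
      · simp [hw, hn]
    · push_neg at hn
      obtain ⟨hnN0, hnl⟩ := hn
      have hlamn : 0 < lam n := lt_of_le_of_ne (hlam0 n) (Ne.symm hnl)
      have hcn : 0 < c n := hcpos n hnl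
      have hden : 0 < lam n + c n := by linarith
      have hwn : w n = lam n + c n := by simp [hw, hnN0, hnl]
      have hεn : ε n = lam n / (lam n + c n) := by simp [hε, hnl]
      have hwε : w n * ε n = lam n := by
        rw [hwn, hεn, mul_div_cancel₀ _ hden.ne']
      rw [hg]
      rw [smul_add, smul_smul, smul_smul, hwε]
      have : w n * (1 - ε n) = w n - lam n := by
        rw [mul_sub, mul_one, hwε]
      rw [this, smul_sub, sub_smul]
      abel
  -- the weight sums stay below 1
  have hwsum : ∀ m, ∑ n ∈ Finset.range (m + 1), w n ≤ 1 - lS / 2 := by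
    intro m
    set F := Finset.range (m + 1) with hF
    have hle1 : ∑ n ∈ F, w n ≤ ∑ n ∈ F, ((if n = N0 then 0 else lam n) + c n) := by
      apply Finset.sum_le_sum
      intro n hn
      by_cases h2 : n = N0
      · have hwz : w n = 0 := by simp [hw, h2]
        rw [hwz, h2]
        simpa using hc0 N0
      · by_cases h3 : lam n = 0
        · have hwz : w n = 0 := by simp [hw, h3]
          rw [hwz, if_neg h2]
          have := hc0 n
          have := hlam0 n
          linarith
        · simp [hw, h2, h3]
    have hsplit : ∑ n ∈ F, ((if n = N0 then 0 else lam n) + c n)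
        = (∑ n ∈ F, (if n = N0 then 0 else lam n)) + ∑ n ∈ F, c n :=
      Finset.sum_add_distrib
    have hlam' : ∑ n ∈ F, (if n = N0 then 0 else lam n) ≤ 1 - lS := by
      have herase : ∑ n ∈ F, (if n = N0 then 0 else lam n)
          = ∑ n ∈ F.erase N0, lam n := by
        have h1 : ∑ n ∈ F.erase N0, (if n = N0 then 0 else lam n)
            = ∑ n ∈ F.erase N0, lam n :=
          Finset.sum_congr rfl fun n hn => if_neg (Finset.ne_of_mem_erase hn)
        rw [← h1]
        exact (Finset.sum_erase _ (by simp)).symm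
      rw [herase]
      have hnm : N0 ∉ F.erase N0 := Finset.notMem_erase _ _
      have := hsum_le (insert N0 (F.erase N0))
      rw [Finset.sum_insert hnm] at this
      linarith
    have hcsum : ∑ n ∈ F, c n ≤ lS / 2 := by
      have htele : ∑ n ∈ F, (s n - s (n + 1)) = s 0 - s (m + 1) := by
        rw [hF]
        exact Finset.sum_range_sub' s (m + 1)
      have : ∑ n ∈ F, c n = lS / 2 * (s 0 - s (m + 1)) := by
        rw [← htele, Finset.mul_sum]
      rw [this, hs0]
      have := hsnn (m + 1)
      have hlSpos : 0 < lS := hN0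
      nlinarith
    linarith
  -- padded partial sums
  set P : ℕ → E := fun m => a + ∑ n ∈ Finset.range (m + 1), lam n • (x n - a) with hP
  have hrep : ∀ m, (∑ n ∈ Finset.range (m + 1), w n • g n)
      + (1 - ∑ n ∈ Finset.range (m + 1), w n) • a = P m := by
    intro m
    have h1 : ∑ n ∈ Finset.range (m + 1), w n • g n
        = (∑ n ∈ Finset.range (m + 1), lam n • (x n - a))
          + (∑ n ∈ Finset.range (m + 1), w n) • a := by
      rw [Finset.sum_smul, ← Finset.sum_add_distrib]
      apply Finset.sum_congr rfl
      intro n _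
      exact hterm n
    rw [h1]
    simp only [hP]
    module
  have hPX : ∀ m, P m ∈ convexHull ℝ K ∩ X := by
    intro m
    constructor
    · rw [← hrep m]
      apply subconv_pad_mem (convex_convexHull ℝ K)
        (subset_convexHull ℝ K (Set.mem_insert a _))
      · intro n _; exact hw0 n
      · have := hwsum m
        have hlSpos : 0 < lS := hN0
        linarith
      · intro n _
        exact subset_convexHull ℝ K (Set.mem_insert_of_mem _ (Set.mem_range_self n))
    · rw [← hrep m]
      apply subconv_pad_mem hX (hxX N0)
      · intro n _; exact hw0 n
      · have := hwsum m
        have hlSpos : 0 < lS := hN0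
        linarith
      · intro n _; exact hgX n
  -- extract a cluster point from compactness
  have hPD : ∀ m, P m ∈ closure (convexHull ℝ K) ∩ X :=
    fun m => ⟨subset_closure (hPX m).1, (hPX m).2⟩
  have hle : Filter.map P atTop ≤ Filter.principal (closure (convexHull ℝ K) ∩ X) := by
    rw [Filter.le_principal_iff, Filter.mem_map]
    exact Filter.Eventually.of_forall hPD
  obtain ⟨z, hzD, hzc⟩ := hD hle
  have hzX : z ∈ X := hzD.2
  have hzfreq : ∀ S ∈ 𝓝 z, ∃ᶠ m in atTop, P m ∈ S := by
    have : MapClusterPt z atTop P := hzc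
    exact mapClusterPt_iff_frequently.1 this
  -- tail estimate from local convexity
  have hClaim1 : ∀ V ∈ 𝓝 (0 : E), Convex ℝ V →
      ∃ N : ℕ, ∀ F : Finset ℕ, (∀ n ∈ F, N ≤ n) →
        (∑ n ∈ F, lam n • (x n - a)) ∈ V := by
    intro V hV hVc
    obtain ⟨r, hr, hrS⟩ := (hbdd' hV).exists_pos
    have hSrV : (Set.range fun n => x n - a) ⊆ r • V := by
      apply hrS r
      rw [Real.norm_eq_abs, abs_of_pos hr]
    obtain ⟨N, hNlt⟩ := (ht_tend.eventually_lt_const (by positivity : (0:ℝ) < 1 / r)).exists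
    refine ⟨N, ?_⟩
    intro F hF
    have hFsum : ∑ n ∈ F, lam n ≤ t N := by
      have hdisj : Disjoint (Finset.range N) F := by
        rw [Finset.disjoint_left]
        intro n hn hnF
        have h1 : n < N := Finset.mem_range.1 hn
        have h2 : N ≤ n := hF n hnF
        omega
      have := hsum_le (Finset.range N ∪ F)
      rw [Finset.sum_union hdisj] at this
      simp only [hT]
      linarith
    have h0V : (0 : E) ∈ V := mem_of_mem_nhds hV
    have hmain := subconv_mem hVc h0V F (fun n => r * lam n)
      (fun n => r⁻¹ • (x n - a))
      (fun n _ => mul_nonneg hr.le (hlam0 n))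
      (by
        rw [← Finset.mul_sum]
        have h1 : r * ∑ n ∈ F, lam n ≤ r * t N := by
          apply mul_le_mul_of_nonneg_left hFsum hr.le
        have h2 : r * t N < r * (1 / r) := by
          apply mul_lt_mul_of_pos_left hNlt hr
        rw [mul_one_div, div_self hr.ne'] at h2
        linarith)
      (by
        intro n _
        have : x n - a ∈ r • V := hSrV (Set.mem_range_self n)
        rwa [Set.mem_smul_set_iff_inv_smul_mem₀ hr.ne'] at this)
    have heq : ∑ n ∈ F, (r * lam n) • r⁻¹ • (x n - a) = ∑ n ∈ F, lam n • (x n - a) := by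
      apply Finset.sum_congr rfl
      intro n _
      rw [smul_smul, mul_comm r, mul_assoc, mul_inv_cancel₀ hr.ne', mul_one]
    rwa [heq] at hmain
  -- conclude: the series converges to z
  refine ⟨z, hzX, ?_⟩
  have hlamT : Tendsto (fun F : Finset ℕ => ∑ n ∈ F, lam n) atTop (𝓝 1) := hlam1
  show Tendsto (fun F : Finset ℕ => ∑ n ∈ F, lam n • x n) atTop (𝓝 z)
  rw [← tendsto_sub_nhds_zero_iff]
  rw [tendsto_iff_forall_eventually_mem]
  intro U hU
  obtain ⟨U₁, hU₁, hU₁U⟩ := exists_nhds_zero_half hU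
  obtain ⟨U₂, hU₂, hU₂U₁⟩ := exists_nhds_zero_half hU₁
  obtain ⟨V, hVp, hVU₂⟩ := (LocallyConvexSpace.convex_basis (𝕜 := ℝ) (0 : E)).mem_iff.1 hU₂
  obtain ⟨hVmem, hVc⟩ := hVp
  obtain ⟨N, hNclaim⟩ := hClaim1 V hVmem hVc
  -- choose m with P m close to z and m ≥ N
  have hzU₂ : {y : E | y - z ∈ U₂} ∈ 𝓝 z := by
    have hcont := (continuous_sub_right z).tendsto z
    rw [sub_self] at hcont
    exact hcont hU₂
  have hfreq : ∃ᶠ m in atTop, P m ∈ {y : E | y - z ∈ U₂} := hzfreq _ hzU₂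
  obtain ⟨m, hmU, hmN⟩ := (hfreq.and_eventually (eventually_ge_atTop N)).exists
  -- the scalar part is eventually small
  have hsmalls : ∀ᶠ F in (atTop : Filter (Finset ℕ)),
      ((∑ n ∈ F, lam n) - 1) • a ∈ U₁ := by
    have h1 : Tendsto (fun F : Finset ℕ => ((∑ n ∈ F, lam n) - 1) • a) atTop (𝓝 0) := by
      have h2 : Tendsto (fun F : Finset ℕ => (∑ n ∈ F, lam n) - 1) atTop (𝓝 0) := by
        have := hlamT.sub_const 1
        simpa using this
      have h3 := h2.smul_const a
      simpa using h3
    exact (tendsto_iff_forall_eventually_mem.1 h1) U₁ hU₁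
  filter_upwards [eventually_ge_atTop (Finset.range (m + 1)), hsmalls] with F hFge hFa
  have hsub : Finset.range (m + 1) ⊆ F := hFge
  have hsplit : ∑ n ∈ F, lam n • (x n - a)
      = (∑ n ∈ Finset.range (m + 1), lam n • (x n - a))
        + ∑ n ∈ F \ Finset.range (m + 1), lam n • (x n - a) := by
    rw [← Finset.sum_union Finset.disjoint_sdiff, Finset.union_sdiff_of_subset hsub]
  have hterm2 : ∑ n ∈ F, lam n • x n
      = (∑ n ∈ F, lam n • (x n - a)) + (∑ n ∈ F, lam n) • a := by
    rw [Finset.sum_smul, ← Finset.sum_add_distrib]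
    apply Finset.sum_congr rfl
    intro n _
    rw [smul_sub]
    abel
  have htail : (∑ n ∈ F \ Finset.range (m + 1), lam n • (x n - a)) ∈ V := by
    apply hNclaim
    intro n hn
    have h1 : n ∉ Finset.range (m + 1) := (Finset.mem_sdiff.1 hn).2
    have h2 : m + 1 ≤ n := by
      by_contra hcon
      exact h1 (Finset.mem_range.2 (by omega))
    omega
  have hdecomp : (∑ n ∈ F, lam n • x n) - z
      = ((P m - z) + ∑ n ∈ F \ Finset.range (m + 1), lam n • (x n - a))
        + ((∑ n ∈ F, lam n) - 1) • a := by
    rw [hterm2, hsplit]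
    simp only [hP]
    module
  rw [hdecomp]
  exact hU₁U _ (hU₂U₁ _ hmU _ (hVU₂ htail)) _ hFa
end

section
/- If X_i, i ∈ I, are compactly convex (respectively ∞-convex) subsets of locally convex spaces E_i, then the product ∏ X_i is a compactly convex (respectively ∞-convex) subset of the product space ∏ E_i. -/
open Bornology

/-- Products of compactly convex (resp. ∞-convex) subsets of locally convex spaces
are compactly convex (resp. ∞-convex) in the product space. -/
theorem stmt2 {I : Type*} {E : I → Type*} [∀ i, AddCommGroup (E i)] [∀ i, Module ℝ (E i)]
    [∀ i, TopologicalSpace (E i)] [∀ i, IsTopologicalAddGroup (E i)]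
    [∀ i, ContinuousSMul ℝ (E i)] [∀ i, LocallyConvexSpace ℝ (E i)]
    (X : ∀ i, Set (E i)) (hX : ∀ i, Convex ℝ (X i)) :
    ((∀ i, IsCompactlyConvexIn (X i)) → IsCompactlyConvexIn (Set.pi Set.univ X)) ∧
    ((∀ i, IsInftyConvexIn (X i)) → IsInftyConvexIn (Set.pi Set.univ X)) := by
  constructor
  · intro h K hKX hK
    set Ki : ∀ i, Set (E i) := fun i => (fun y => y i) '' K with hKi
    have hKic : ∀ i, IsCompact (Ki i) := fun i => hK.image (continuous_apply i)
    have hKiX : ∀ i, Ki i ⊆ X i := by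
      rintro i _ ⟨y, hy, rfl⟩
      exact hKX hy i trivial
    set C : ∀ i, Set (E i) := fun i => closure (convexHull ℝ (Ki i)) ∩ X i with hC
    have hCc : IsCompact (Set.pi Set.univ C) :=
      isCompact_univ_pi fun i => h i (Ki i) (hKiX i) (hKic i)
    have hsub : closure (convexHull ℝ K) ⊆
        Set.pi Set.univ fun i => closure (convexHull ℝ (Ki i)) := by
      apply closure_minimal
      · apply convexHull_min
        · intro y hy i _
          exact subset_closure (subset_convexHull ℝ _ ⟨y, hy, rfl⟩)
        · exact convex_pi fun i _ => (convex_convexHull ℝ _).closure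
      · exact isClosed_set_pi fun i _ => isClosed_closure
    have heq : closure (convexHull ℝ K) ∩ Set.pi Set.univ X
        = closure (convexHull ℝ K) ∩ Set.pi Set.univ C := by
      ext y
      constructor
      · rintro ⟨h1, h2⟩
        exact ⟨h1, fun i _ => ⟨hsub h1 i trivial, h2 i trivial⟩⟩
      · rintro ⟨h1, h2⟩
        exact ⟨h1, fun i _ => (h2 i trivial).2⟩
    rw [heq]
    exact hCc.inter_left isClosed_closure
  · intro h x hx hb lam hlam hsum
    have hpi : ∀ i, ∃ p ∈ X i, HasSum (fun n => lam n • x n i) p := by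
      intro i
      apply h i (fun n => x n i) (fun n => hx n i trivial) _ lam hlam hsum
      have : Set.range (fun n => x n i)
          = (fun y => y i) '' Set.range x := by
        rw [← Set.range_comp]; rfl
      rw [this]
      exact (hb.image (ContinuousLinearMap.proj (R := ℝ) (φ := E) i))
    choose p hpX hps using hpi
    exact ⟨p, fun i _ => hpX i, Pi.hasSum.mpr hps⟩
end

section
/- The subset σ = {(x_i) ∈ ℝ^ω : x_i ≠ 0 for only finitely many i, and |x_i| < 1 for all i} of ℝ^ω is not ∞-convex; in particular there is a bounded sequence of points of σ and weights λ_n ≥ 0 with ∑ λ_n = 1 such that ∑ λ_n x_n converges in ℝ^ω to a point outside σ. -/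
open Bornology

/-- The set `σ` of eventually-zero sequences in the pseudo-interior of the Hilbert cube. -/
def sigmaSet : Set (ℕ → ℝ) :=
  {x | {i | x i ≠ 0}.Finite ∧ ∀ i, |x i| < 1}


noncomputable def myX : ℕ → (ℕ → ℝ) := fun n i => if n = i then (1/2 : ℝ) else 0
noncomputable def myLam : ℕ → ℝ := fun n => 1 / 2 / 2 ^ n
noncomputable def myP : ℕ → ℝ := fun i => myLam i * (1/2)


lemma myX_mem : ∀ n, myX n ∈ sigmaSet := by
  intro n
  constructor
  · apply Set.Finite.subset (Set.finite_singleton n)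
    intro i hi
    simp only [myX, Set.mem_setOf_eq, ne_eq, ite_eq_right_iff, not_forall] at hi
    exact hi.1.symm
  · intro i
    simp only [myX]
    split_ifs <;> rw [abs_lt] <;> constructor <;> norm_num

lemma myX_bounded : IsVonNBounded ℝ (Set.range myX) := by
  have hK : IsCompact (Set.univ.pi fun _ : ℕ => Set.Icc (-1:ℝ) 1) :=
    isCompact_univ_pi fun _ => isCompact_Icc
  refine (hK.totallyBounded.isVonNBounded ℝ).subset ?_
  rintro _ ⟨n, rfl⟩ i _
  simp only [myX]
  split_ifs <;> constructor <;> norm_num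

lemma myLam_hasSum : HasSum myLam 1 := hasSum_geometric_two' 1

lemma myKey : HasSum (fun n => myLam n • myX n) myP := by
  rw [Pi.hasSum]
  intro i
  have : (fun n => (myLam n • myX n) i) = fun n => if n = i then myLam i * (1/2) else 0 := by
    funext n
    simp only [Pi.smul_apply, myX, smul_eq_mul, mul_ite, mul_zero]
    split_ifs with h
    · rw [h]
    · rfl
  rw [this]
  exact hasSum_ite_eq i _

lemma myP_not_mem : myP ∉ sigmaSet := by
  intro ⟨hfin, _⟩
  have : {i | myP i ≠ 0} = Set.univ := by
    ext i
    simp only [myP, myLam, Set.mem_setOf_eq, Set.mem_univ, iff_true]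
    positivity
  rw [this] at hfin
  exact Set.infinite_univ hfin

lemma myLam_nonneg : ∀ n, 0 ≤ myLam n := fun n => by unfold myLam; positivity

/-- The set `σ ⊆ ℝ^ω` is not ∞-convex; in particular there is a bounded sequence of points
of `σ` and nonnegative weights summing to `1` such that the weighted series converges in
`ℝ^ω` to a point outside `σ`. -/
theorem stmt10 :
    ¬ IsInftyConvexIn sigmaSet ∧
    ∃ x : ℕ → (ℕ → ℝ), (∀ n, x n ∈ sigmaSet) ∧
      Bornology.IsVonNBounded ℝ (Set.range x) ∧
      ∃ lam : ℕ → ℝ, (∀ n, 0 ≤ lam n) ∧ HasSum lam 1 ∧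
        ∃ p : ℕ → ℝ, HasSum (fun n => lam n • x n) p ∧ p ∉ sigmaSet := by
  constructor
  · intro h
    obtain ⟨q, hq, hqs⟩ := h myX myX_mem myX_bounded myLam myLam_nonneg myLam_hasSum
    rw [hqs.unique myKey] at hq
    exact myP_not_mem hq
  · exact ⟨myX, myX_mem, myX_bounded, myLam, myLam_nonneg, myLam_hasSum, myP, myKey,
      myP_not_mem⟩
end

section
/- Let (X, d) be a metric space with bounded metric d. Given two tight (Radon) Borel probability measures μ, η on X, there exists a tight Borel probability measure λ on X × X whose marginals are μ and η and which attains the infimum defining the Kantorovich distance: ∫_{X×X} d dλ = inf over all couplings λ' of μ and η of ∫ d dλ'. -/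
open MeasureTheory
open scoped ENNReal

/-- A measure is tight (Radon) if the complement of some compact set has arbitrarily
small measure. -/
def IsTightM {α : Type*} [TopologicalSpace α] {m : MeasurableSpace α} (μ : Measure α) : Prop :=
  ∀ ε : ℝ≥0∞, 0 < ε → ∃ K : Set α, IsCompact K ∧ μ Kᶜ ≤ ε

/-- `l` is a coupling of `μ` and `η` if its marginals are `μ` and `η`. -/
def IsCoupling {α : Type*} {m : MeasurableSpace α} (l : Measure (α × α)) (μ η : Measure α) :
    Prop :=
  l.map Prod.fst = μ ∧ l.map Prod.snd = η

/-- The Kantorovich distance between two (tight) probability measures: the infimum of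
`∫ dist dλ` over all tight couplings `λ` of `μ` and `η`. -/
noncomputable def kant {α : Type*} [PseudoMetricSpace α] [MeasurableSpace α]
    (μ η : Measure α) : ℝ :=
  sInf {r | ∃ l : Measure (α × α), IsProbabilityMeasure l ∧ IsTightM l ∧
    IsCoupling l μ η ∧ r = ∫ p, dist p.1 p.2 ∂l}


set_option linter.unusedSectionVars false
open Filter Set
open scoped Topology

section AuxOptimalCoupling

variable {X : Type*} [MetricSpace X] [MeasurableSpace X] [BorelSpace X]

lemma aux_inner_compact (μ : Measure X) [IsFiniteMeasure μ] (hμ : IsTightM μ) {A : Set X}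
    (hA : MeasurableSet A) {ε : ℝ≥0∞} (hε : ε ≠ 0) :
    ∃ K, IsCompact K ∧ K ⊆ A ∧ μ (A \ K) ≤ ε := by
  have h2 : (ε / 2) ≠ 0 := by simp [ENNReal.div_eq_top, hε]
  obtain ⟨F, hFA, hFc, hF⟩ := hA.exists_isClosed_lt_add (measure_ne_top μ A) h2
  obtain ⟨K₀, hK₀c, hK₀⟩ := hμ (ε/2) (pos_iff_ne_zero.mpr h2)
  refine ⟨F ∩ K₀, hK₀c.inter_left hFc, inter_subset_left.trans hFA, ?_⟩
  have hsub : A \ (F ∩ K₀) ⊆ (A \ F) ∪ K₀ᶜ := by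
    intro x hx; by_cases hxF : x ∈ F
    · exact Or.inr (fun hK => hx.2 ⟨hxF, hK⟩)
    · exact Or.inl ⟨hx.1, hxF⟩
  have hAF : μ (A \ F) ≤ ε / 2 := by
    have := measure_diff hFA hFc.measurableSet.nullMeasurableSet (measure_ne_top μ F)
    rw [this]
    exact tsub_le_iff_right.mpr (by rw [add_comm]; exact hF.le)
  calc μ (A \ (F ∩ K₀)) ≤ μ ((A \ F) ∪ K₀ᶜ) := measure_mono hsub
    _ ≤ μ (A \ F) + μ K₀ᶜ := measure_union_le _ _
    _ ≤ ε / 2 + ε / 2 := add_le_add hAF hK₀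
    _ = ε := ENNReal.add_halves ε

lemma aux_outer_open (μ : Measure X) [IsFiniteMeasure μ] {A : Set X}
    (hA : MeasurableSet A) {ε : ℝ≥0∞} (hε : ε ≠ 0) :
    ∃ U, IsOpen U ∧ A ⊆ U ∧ μ (U \ A) ≤ ε := by
  obtain ⟨U, hAU, hUo, hU⟩ := A.exists_isOpen_lt_add (measure_ne_top μ A) hε
  refine ⟨U, hUo, hAU, ?_⟩
  have := measure_diff hAU hA.nullMeasurableSet (measure_ne_top μ A)
  rw [this]
  exact tsub_le_iff_right.mpr (by rw [add_comm]; exact hU.le)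

noncomputable def elim (lam : ℕ → Measure (X × X)) (s : Set (X × X)) : ℝ≥0∞ :=
  ((Ultrafilter.of (atTop : Filter ℕ)).map fun n => lam n s).lim

lemma tendsto_elim (lam : ℕ → Measure (X × X)) (s : Set (X × X)) :
    Tendsto (fun n => lam n s) (Ultrafilter.of (atTop : Filter ℕ)) (𝓝 (elim lam s)) :=
  Ultrafilter.le_nhds_lim _

lemma elim_eq {lam : ℕ → Measure (X × X)} {s : Set (X × X)} {x : ℝ≥0∞}
    (h : Tendsto (fun n => lam n s) (Ultrafilter.of (atTop : Filter ℕ)) (𝓝 x)) :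
    elim lam s = x :=
  tendsto_nhds_unique (tendsto_elim lam s) h

lemma coupl_fst {μ η : Measure X} {l : Measure (X × X)} (hc : IsCoupling l μ η) {W : Set X}
    (hW : MeasurableSet W) : l (W ×ˢ univ) = μ W := by
  rw [Set.prod_univ, ← Measure.map_apply measurable_fst hW, hc.1]

lemma coupl_snd {μ η : Measure X} {l : Measure (X × X)} (hc : IsCoupling l μ η) {W : Set X}
    (hW : MeasurableSet W) : l (univ ×ˢ W) = η W := by
  rw [Set.univ_prod, ← Measure.map_apply measurable_snd hW, hc.2]

lemma coupl_diff_le {μ η : Measure X} {l : Measure (X × X)} (hc : IsCoupling l μ η)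
    {S T S' T' : Set X} (hS : MeasurableSet S) (hT : MeasurableSet T)
    (hS' : MeasurableSet S') (hT' : MeasurableSet T') :
    l ((S ×ˢ T) \ (S' ×ˢ T')) ≤ μ (S \ S') + η (T \ T') := by
  have hsub : (S ×ˢ T) \ (S' ×ˢ T') ⊆ ((S \ S') ×ˢ univ) ∪ (univ ×ˢ (T \ T')) := by
    rintro ⟨x, y⟩ ⟨⟨hx, hy⟩, hxy⟩
    by_cases hxS : x ∈ S'
    · exact Or.inr ⟨trivial, hy, fun hyT => hxy ⟨hxS, hyT⟩⟩
    · exact Or.inl ⟨⟨hx, hxS⟩, trivial⟩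
  calc l _ ≤ l (((S \ S') ×ˢ univ) ∪ (univ ×ˢ (T \ T'))) := measure_mono hsub
    _ ≤ l ((S \ S') ×ˢ univ) + l (univ ×ˢ (T \ T')) := measure_union_le _ _
    _ = μ (S \ S') + η (T \ T') := by
        rw [coupl_fst hc, coupl_snd hc]
        exacts [hT.diff hT', hS.diff hS']

def IsRect (s : Set (X × X)) : Prop :=
  ∃ A B : Set X, MeasurableSet A ∧ MeasurableSet B ∧ s = A ×ˢ B

open Classical in
noncomputable def mRect (lam : ℕ → Measure (X × X)) (s : Set (X × X)) : ℝ≥0∞ :=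
  if IsRect s then elim lam s else ∞

lemma mRect_of_rect {lam : ℕ → Measure (X × X)} {s : Set (X × X)} (h : IsRect s) :
    mRect lam s = elim lam s := by rw [mRect, if_pos h]

lemma mRect_empty (lam : ℕ → Measure (X × X)) : mRect lam ∅ = 0 := by
  rw [mRect_of_rect ⟨∅, ∅, .empty, .empty, by simp⟩]
  exact elim_eq (by simp only [measure_empty]; exact tendsto_const_nhds)

/-- decomposition of a rectangle along another rectangle -/
lemma elim_rect_decomp (lam : ℕ → Measure (X × X)) {A B A' B' : Set X}
    (hA : MeasurableSet A) (hB : MeasurableSet B)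
    (hA' : MeasurableSet A') (hB' : MeasurableSet B') :
    elim lam (A' ×ˢ B') = elim lam ((A' ∩ A) ×ˢ (B' ∩ B)) +
      (elim lam ((A' \ A) ×ˢ B') + elim lam ((A' ∩ A) ×ˢ (B' \ B))) := by
  have hun : A' ×ˢ B' =
      ((A' ∩ A) ×ˢ (B' ∩ B)) ∪ (((A' \ A) ×ˢ B') ∪ ((A' ∩ A) ×ˢ (B' \ B))) := by
    ext ⟨x, y⟩
    simp only [mem_prod, mem_union, mem_inter_iff, mem_diff]
    tauto
  have hd1 : Disjoint ((A' ∩ A) ×ˢ (B' ∩ B)) (((A' \ A) ×ˢ B') ∪ ((A' ∩ A) ×ˢ (B' \ B))) := by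
    rw [disjoint_union_right]
    constructor
    all_goals
      rw [Set.disjoint_left]
      rintro ⟨x, y⟩ h1 h2
      simp only [mem_prod, mem_inter_iff, mem_diff] at h1 h2
      tauto
  have hd2 : Disjoint ((A' \ A) ×ˢ B') ((A' ∩ A) ×ˢ (B' \ B)) := by
    rw [Set.disjoint_left]; rintro ⟨x, y⟩ h1 h2
    simp only [mem_prod, mem_inter_iff, mem_diff] at h1 h2; tauto
  have hpt : ∀ n, lam n (A' ×ˢ B') = lam n ((A' ∩ A) ×ˢ (B' ∩ B)) +
      (lam n ((A' \ A) ×ˢ B') + lam n ((A' ∩ A) ×ˢ (B' \ B))) := by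
    intro n
    rw [hun, measure_union hd1 (((hA'.diff hA).prod hB').union ((hA'.inter hA).prod (hB'.diff hB))),
      measure_union hd2 ((hA'.inter hA).prod (hB'.diff hB))]
  exact elim_eq (Tendsto.congr (fun n => (hpt n).symm)
    ((tendsto_elim lam _).add ((tendsto_elim lam _).add (tendsto_elim lam _))))

/-- main countable subadditivity estimate -/
lemma elim_prod_le_tsum (μ η : Measure X) [IsProbabilityMeasure μ] [IsProbabilityMeasure η]
    (hμt : IsTightM μ) (hηt : IsTightM η) (lam : ℕ → Measure (X × X))
    (hc : ∀ n, IsCoupling (lam n) μ η) {A B : Set X}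
    (hA : MeasurableSet A) (hB : MeasurableSet B) (c : ℕ → Set (X × X))
    (hcov : A ×ˢ B ⊆ ⋃ i, c i) :
    elim lam (A ×ˢ B) ≤ ∑' i, mRect lam (c i) := by
  by_cases hrect : ∀ i, IsRect (c i)
  case neg =>
    push_neg at hrect; obtain ⟨i, hi⟩ := hrect
    have h1 : (⊤ : ℝ≥0∞) ≤ ∑' i, mRect lam (c i) := by
      calc (⊤ : ℝ≥0∞) = mRect lam (c i) := by rw [mRect, if_neg hi]
        _ ≤ _ := ENNReal.le_tsum i
    exact le_top.trans h1
  choose AA BB hAA hBB hcEq using hrect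
  refine ENNReal.le_of_forall_pos_le_add fun ε hε _ => ?_
  set κ : ℝ≥0∞ := (ε : ℝ≥0∞) with hκ
  have hκ0 : κ ≠ 0 := by simpa [hκ] using hε.ne'
  have hκ20 : κ / 2 ≠ 0 := by simp [ENNReal.div_eq_zero_iff, hκ0]
  have hκ40 : κ / 2 / 2 ≠ 0 := by simp [ENNReal.div_eq_zero_iff, hκ20]
  obtain ⟨δ, hδpos, hδsum⟩ := ENNReal.exists_pos_sum_of_countable hκ40 ℕ
  obtain ⟨K, hKc, hKA, hKm⟩ := aux_inner_compact μ hμt hA hκ40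
  obtain ⟨K', hK'c, hK'B, hK'm⟩ := aux_inner_compact η hηt hB hκ40
  have hU := fun i => aux_outer_open μ (hAA i) (ε := δ i) (by exact_mod_cast (hδpos i).ne')
  have hV := fun i => aux_outer_open η (hBB i) (ε := δ i) (by exact_mod_cast (hδpos i).ne')
  choose U hUo hAU hUm using hU
  choose V hVo hBV hVm using hV
  have hsubc : K ×ˢ K' ⊆ ⋃ i, (U i ×ˢ V i) := by
    refine ((Set.prod_mono hKA hK'B).trans hcov).trans (Set.iUnion_mono fun i => ?_)
    rw [hcEq i]; exact Set.prod_mono (hAU i) (hBV i)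
  obtain ⟨F, hF⟩ := (hKc.prod hK'c).elim_finite_subcover (fun i => U i ×ˢ V i)
    (fun i => (hUo i).prod (hVo i)) hsubc
  have key : ∀ n, lam n (A ×ˢ B) ≤ (∑ i ∈ F, lam n (c i)) + κ := by
    intro n
    have h1 : lam n (A ×ˢ B) ≤ lam n (K ×ˢ K') + κ / 2 := by
      calc lam n (A ×ˢ B) ≤ lam n ((K ×ˢ K') ∪ ((A ×ˢ B) \ (K ×ˢ K'))) :=
            measure_mono (by
              intro p hp
              by_cases h : p ∈ K ×ˢ K'
              · exact Or.inl h
              · exact Or.inr ⟨hp, h⟩)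
        _ ≤ lam n (K ×ˢ K') + lam n ((A ×ˢ B) \ (K ×ˢ K')) := measure_union_le _ _
        _ ≤ lam n (K ×ˢ K') + (μ (A \ K) + η (B \ K')) := by
            gcongr
            exact coupl_diff_le (hc n) hA hB hKc.measurableSet hK'c.measurableSet
        _ ≤ lam n (K ×ˢ K') + (κ / 2 / 2 + κ / 2 / 2) := by gcongr
        _ = lam n (K ×ˢ K') + κ / 2 := by rw [ENNReal.add_halves]
    have h2 : lam n (K ×ˢ K') ≤ ∑ i ∈ F, lam n (U i ×ˢ V i) :=
      (measure_mono hF).trans (measure_biUnion_finset_le _ _)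
    have h3 : ∀ i, lam n (U i ×ˢ V i) ≤ lam n (c i) + ((δ i : ℝ≥0∞) + (δ i : ℝ≥0∞)) := by
      intro i
      calc lam n (U i ×ˢ V i)
          ≤ lam n ((AA i ×ˢ BB i) ∪ ((U i ×ˢ V i) \ (AA i ×ˢ BB i))) :=
            measure_mono (by
              intro p hp
              by_cases h : p ∈ AA i ×ˢ BB i
              · exact Or.inl h
              · exact Or.inr ⟨hp, h⟩)
        _ ≤ lam n (AA i ×ˢ BB i) + lam n ((U i ×ˢ V i) \ (AA i ×ˢ BB i)) := measure_union_le _ _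
        _ ≤ lam n (AA i ×ˢ BB i) + (μ (U i \ AA i) + η (V i \ BB i)) := by
            gcongr
            exact coupl_diff_le (hc n) (hUo i).measurableSet (hVo i).measurableSet (hAA i) (hBB i)
        _ = lam n (c i) + (μ (U i \ AA i) + η (V i \ BB i)) := by rw [hcEq i]
        _ ≤ lam n (c i) + ((δ i : ℝ≥0∞) + (δ i : ℝ≥0∞)) := by
            gcongr
            · exact hUm i
            · exact hVm i
    have h4 : (∑ i ∈ F, ((δ i : ℝ≥0∞) + (δ i : ℝ≥0∞))) ≤ κ / 2 := by
      rw [Finset.sum_add_distrib]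
      calc (∑ i ∈ F, (δ i : ℝ≥0∞)) + ∑ i ∈ F, (δ i : ℝ≥0∞)
          ≤ κ / 2 / 2 + κ / 2 / 2 := by
            gcongr <;> exact (ENNReal.sum_le_tsum F).trans hδsum.le
        _ = κ / 2 := ENNReal.add_halves _
    calc lam n (A ×ˢ B) ≤ lam n (K ×ˢ K') + κ / 2 := h1
      _ ≤ (∑ i ∈ F, lam n (U i ×ˢ V i)) + κ / 2 := by gcongr
      _ ≤ (∑ i ∈ F, (lam n (c i) + ((δ i : ℝ≥0∞) + (δ i : ℝ≥0∞)))) + κ / 2 := by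
          gcongr with i hi; exact h3 i
      _ = ((∑ i ∈ F, lam n (c i)) + ∑ i ∈ F, ((δ i : ℝ≥0∞) + (δ i : ℝ≥0∞))) + κ / 2 := by
          rw [Finset.sum_add_distrib]
      _ ≤ ((∑ i ∈ F, lam n (c i)) + κ / 2) + κ / 2 := by gcongr
      _ = (∑ i ∈ F, lam n (c i)) + κ := by rw [add_assoc, ENNReal.add_halves]
  have htend : Tendsto (fun n => (∑ i ∈ F, lam n (c i)) + κ) (Ultrafilter.of (atTop : Filter ℕ))
      (𝓝 ((∑ i ∈ F, elim lam (c i)) + κ)) :=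
    (tendsto_finset_sum F (fun i _ => tendsto_elim lam (c i))).add tendsto_const_nhds
  have hle : elim lam (A ×ˢ B) ≤ (∑ i ∈ F, elim lam (c i)) + κ :=
    le_of_tendsto_of_tendsto (tendsto_elim lam _) htend (Eventually.of_forall key)
  refine hle.trans ?_
  gcongr
  calc ∑ i ∈ F, elim lam (c i) = ∑ i ∈ F, mRect lam (c i) := by
        refine Finset.sum_congr rfl fun i _ => ?_
        rw [mRect_of_rect ⟨AA i, BB i, hAA i, hBB i, hcEq i⟩]
    _ ≤ ∑' i, mRect lam (c i) := ENNReal.sum_le_tsum F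

noncomputable def nuOM (lam : ℕ → Measure (X × X)) : OuterMeasure (X × X) :=
  OuterMeasure.ofFunction (mRect lam) (mRect_empty lam)

lemma nuOM_le_elim {lam : ℕ → Measure (X × X)} {s : Set (X × X)} (h : IsRect s) :
    nuOM lam s ≤ elim lam s :=
  (OuterMeasure.ofFunction_le s).trans_eq (mRect_of_rect h)

lemma isCaratheodory_rect (lam : ℕ → Measure (X × X)) {A B : Set X}
    (hA : MeasurableSet A) (hB : MeasurableSet B) :
    (nuOM lam).IsCaratheodory (A ×ˢ B) := by
  rw [OuterMeasure.isCaratheodory_iff_le']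
  intro t
  rw [nuOM, OuterMeasure.ofFunction_apply]
  refine le_iInf fun c => le_iInf fun hcov => ?_
  by_cases hrect : ∀ i, IsRect (c i)
  case neg =>
    push_neg at hrect; obtain ⟨i, hi⟩ := hrect
    have h1 : (⊤ : ℝ≥0∞) ≤ ∑' i, mRect lam (c i) := by
      calc (⊤ : ℝ≥0∞) = mRect lam (c i) := by rw [mRect, if_neg hi]
        _ ≤ _ := ENNReal.le_tsum i
    exact le_top.trans h1
  choose AA BB hAA hBB hcEq using hrect
  have h1 : nuOM lam (t ∩ A ×ˢ B) ≤ ∑' i, elim lam ((AA i ∩ A) ×ˢ (BB i ∩ B)) := by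
    have hsub : t ∩ A ×ˢ B ⊆ ⋃ i, (c i ∩ A ×ˢ B) := by
      rw [← Set.iUnion_inter]; exact inter_subset_inter_left _ hcov
    refine (measure_mono hsub).trans ((measure_iUnion_le _).trans ?_)
    refine ENNReal.tsum_le_tsum fun i => ?_
    have : c i ∩ A ×ˢ B = (AA i ∩ A) ×ˢ (BB i ∩ B) := by
      rw [hcEq i, Set.prod_inter_prod]
    rw [this]
    exact nuOM_le_elim ⟨_, _, (hAA i).inter hA, (hBB i).inter hB, rfl⟩
  have h2 : nuOM lam (t \ A ×ˢ B) ≤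
      ∑' i, (elim lam ((AA i \ A) ×ˢ BB i) + elim lam ((AA i ∩ A) ×ˢ (BB i \ B))) := by
    have hsub : t \ A ×ˢ B ⊆ ⋃ i, (c i \ A ×ˢ B) := by
      rw [← Set.iUnion_diff]; exact diff_subset_diff_left hcov
    refine (measure_mono hsub).trans ((measure_iUnion_le _).trans ?_)
    refine ENNReal.tsum_le_tsum fun i => ?_
    have hsub2 : c i \ A ×ˢ B ⊆ ((AA i \ A) ×ˢ BB i) ∪ ((AA i ∩ A) ×ˢ (BB i \ B)) := by
      rw [hcEq i]
      rintro ⟨x, y⟩ ⟨⟨hx, hy⟩, hn⟩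
      by_cases hxA : x ∈ A
      · exact Or.inr ⟨⟨hx, hxA⟩, hy, fun hyB => hn ⟨hxA, hyB⟩⟩
      · exact Or.inl ⟨⟨hx, hxA⟩, hy⟩
    refine (measure_mono hsub2).trans ((measure_union_le _ _).trans ?_)
    exact add_le_add (nuOM_le_elim ⟨_, _, (hAA i).diff hA, hBB i, rfl⟩)
      (nuOM_le_elim ⟨_, _, (hAA i).inter hA, (hBB i).diff hB, rfl⟩)
  calc nuOM lam (t ∩ A ×ˢ B) + nuOM lam (t \ A ×ˢ B)
      ≤ (∑' i, elim lam ((AA i ∩ A) ×ˢ (BB i ∩ B))) +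
        ∑' i, (elim lam ((AA i \ A) ×ˢ BB i) + elim lam ((AA i ∩ A) ×ˢ (BB i \ B))) :=
        add_le_add h1 h2
    _ = ∑' i, (elim lam ((AA i ∩ A) ×ˢ (BB i ∩ B)) +
        (elim lam ((AA i \ A) ×ˢ BB i) + elim lam ((AA i ∩ A) ×ˢ (BB i \ B)))) :=
        (ENNReal.tsum_add).symm
    _ = ∑' i, elim lam (c i) := by
        refine tsum_congr fun i => ?_
        rw [hcEq i, ← elim_rect_decomp lam hA hB (hAA i) (hBB i)]
    _ = ∑' i, mRect lam (c i) := by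
        refine tsum_congr fun i => ?_
        rw [mRect_of_rect ⟨AA i, BB i, hAA i, hBB i, hcEq i⟩]

noncomputable def LAM (lam : ℕ → Measure (X × X)) : Measure (X × X) :=
  (nuOM lam).toMeasure (by
    rw [← generateFrom_prod]
    refine MeasurableSpace.generateFrom_le ?_
    rintro t ⟨A, hA, B, hB, rfl⟩
    exact isCaratheodory_rect lam hA hB)

lemma LAM_apply (lam : ℕ → Measure (X × X)) {s : Set (X × X)} (hs : MeasurableSet s) :
    LAM lam s = nuOM lam s :=
  toMeasure_apply _ _ hs

lemma LAM_rect (μ η : Measure X) [IsProbabilityMeasure μ] [IsProbabilityMeasure η]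
    (hμt : IsTightM μ) (hηt : IsTightM η) (lam : ℕ → Measure (X × X))
    (hc : ∀ n, IsCoupling (lam n) μ η) {A B : Set X}
    (hA : MeasurableSet A) (hB : MeasurableSet B) :
    LAM lam (A ×ˢ B) = elim lam (A ×ˢ B) := by
  rw [LAM_apply lam (hA.prod hB)]
  refine le_antisymm (nuOM_le_elim ⟨A, B, hA, hB, rfl⟩) ?_
  rw [nuOM, OuterMeasure.ofFunction_apply]
  exact le_iInf fun c => le_iInf fun hcov =>
    elim_prod_le_tsum μ η hμt hηt lam hc hA hB c hcov

lemma nonempty_of_prob (μ : Measure X) [IsProbabilityMeasure μ] : Nonempty X := by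
  by_contra h
  rw [not_nonempty_iff] at h
  have h1 : (univ : Set X) = ∅ := Set.univ_eq_empty_iff.mpr h
  have h2 : μ univ = 1 := measure_univ
  rw [h1, measure_empty] at h2
  exact zero_ne_one h2

lemma exists_conull_separable (μ η : Measure X) [IsProbabilityMeasure μ] [IsProbabilityMeasure η]
    (hμt : IsTightM μ) (hηt : IsTightM η) :
    ∃ S : Set X, IsClosed S ∧ TopologicalSpace.IsSeparable S ∧ μ Sᶜ = 0 ∧ η Sᶜ = 0 := by
  have hpos : ∀ n : ℕ, (0 : ℝ≥0∞) < (n : ℝ≥0∞)⁻¹ := fun n =>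
    ENNReal.inv_pos.mpr (ENNReal.natCast_ne_top n)
  choose Kμ hKμc hKμm using fun n => hμt _ (hpos n)
  choose Kη hKηc hKηm using fun n => hηt _ (hpos n)
  set T : Set X := ⋃ n, (Kμ n ∪ Kη n) with hT
  refine ⟨closure T, isClosed_closure, ?_, ?_, ?_⟩
  · exact (TopologicalSpace.IsSeparable.iUnion fun n =>
      (hKμc n).isSeparable.union (hKηc n).isSeparable).closure
  · have hb : ∀ n : ℕ, μ (closure T)ᶜ ≤ (n : ℝ≥0∞)⁻¹ := by
      intro n
      refine (measure_mono ?_).trans (hKμm n)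
      refine compl_subset_compl.mpr ((subset_closure.trans' ?_))
      exact (subset_union_left).trans (subset_iUnion (fun n => Kμ n ∪ Kη n) n)
    exact le_antisymm (ge_of_tendsto' ENNReal.tendsto_inv_nat_nhds_zero hb) zero_le
  · have hb : ∀ n : ℕ, η (closure T)ᶜ ≤ (n : ℝ≥0∞)⁻¹ := by
      intro n
      refine (measure_mono ?_).trans (hKηm n)
      refine compl_subset_compl.mpr ((subset_closure.trans' ?_))
      exact (subset_union_right).trans (subset_iUnion (fun n => Kμ n ∪ Kη n) n)
    exact le_antisymm (ge_of_tendsto' ENNReal.tendsto_inv_nat_nhds_zero hb) zero_le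

lemma exists_good_f {S : Set X} (hSm : MeasurableSet S)
    (hSsep : TopologicalSpace.IsSeparable S) {C : ℝ} (hC0 : 0 ≤ C)
    (hC : ∀ x y : X, dist x y ≤ C) :
    ∃ f : X × X → ℝ, Measurable f ∧ (∀ p : X × X, p.1 ∈ S → p.2 ∈ S → f p = dist p.1 p.2) ∧
      (∀ p, 0 ≤ f p) ∧ (∀ p, f p ≤ C) := by
  haveI := hSsep.separableSpace
  haveI : SecondCountableTopology ↥S := UniformSpace.secondCountable_of_separable ↥S
  haveI : BorelSpace ↥S := Subtype.borelSpace S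
  set ι : ↥S × ↥S → X × X := fun q => ((q.1 : X), (q.2 : X)) with hι
  have hemb : MeasurableEmbedding ι :=
    (MeasurableEmbedding.subtype_coe hSm).prodMap (MeasurableEmbedding.subtype_coe hSm)
  have hg : Measurable (fun q : ↥S × ↥S => dist (q.1 : X) (q.2 : X)) :=
    (continuous_subtype_val.comp continuous_fst).dist
      (continuous_subtype_val.comp continuous_snd) |>.measurable
  refine ⟨Function.extend ι (fun q => dist (q.1 : X) (q.2 : X)) 0,
    hemb.measurable_extend hg measurable_const, ?_, ?_, ?_⟩
  · rintro ⟨x, y⟩ hx hy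
    have : (x, y) = ι (⟨x, hx⟩, ⟨y, hy⟩) := rfl
    rw [this, hemb.injective.extend_apply]
  · intro p
    classical
    rw [Function.extend_def]
    split
    · exact dist_nonneg
    · exact le_refl 0
  · intro p
    classical
    rw [Function.extend_def]
    split
    · exact hC _ _
    · simpa using hC0

lemma coupl_compl_prod_le {μ η : Measure X} {l : Measure (X × X)} (hc : IsCoupling l μ η)
    {G H : Set X} (hG : MeasurableSet G) (hH : MeasurableSet H) :
    l ((G ×ˢ H)ᶜ) ≤ μ Gᶜ + η Hᶜ := by
  have hsub : (G ×ˢ H)ᶜ ⊆ (Gᶜ ×ˢ univ) ∪ (univ ×ˢ Hᶜ) := by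
    rintro ⟨x, y⟩ hp
    by_cases hx : x ∈ G
    · exact Or.inr ⟨trivial, fun hy => hp ⟨hx, hy⟩⟩
    · exact Or.inl ⟨hx, trivial⟩
  calc l ((G ×ˢ H)ᶜ) ≤ l (Gᶜ ×ˢ univ) + l (univ ×ˢ Hᶜ) :=
        (measure_mono hsub).trans (measure_union_le _ _)
    _ = μ Gᶜ + η Hᶜ := by rw [coupl_fst hc hG.compl, coupl_snd hc hH.compl]

/-- product coupling is tight -/
lemma prod_coupling_tight {μ η : Measure X} [IsProbabilityMeasure μ] [IsProbabilityMeasure η]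
    (hμt : IsTightM μ) (hηt : IsTightM η) {l : Measure (X × X)} (hc : IsCoupling l μ η) :
    IsTightM l := by
  intro ε hε
  have h2 : (ε / 2) ≠ 0 := by simp [ENNReal.div_eq_top, hε.ne']
  obtain ⟨K, hKc, hKm⟩ := hμt (ε/2) (pos_iff_ne_zero.mpr h2)
  obtain ⟨K', hK'c, hK'm⟩ := hηt (ε/2) (pos_iff_ne_zero.mpr h2)
  refine ⟨K ×ˢ K', hKc.prod hK'c, ?_⟩
  calc l ((K ×ˢ K')ᶜ) ≤ μ Kᶜ + η K'ᶜ :=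
        coupl_compl_prod_le hc hKc.measurableSet hK'c.measurableSet
    _ ≤ ε / 2 + ε / 2 := add_le_add hKm hK'm
    _ = ε := ENNReal.add_halves ε

lemma master_approx {μ η : Measure X} [IsProbabilityMeasure μ] [IsProbabilityMeasure η]
    {l : Measure (X × X)} [IsProbabilityMeasure l] (hc : IsCoupling l μ η)
    {f : X × X → ℝ} (hfm : Measurable f) (hf0 : ∀ p, 0 ≤ f p) {C : ℝ} (hC0 : 0 ≤ C)
    (hfC : ∀ p, f p ≤ C)
    {S : Set X} (hfS : ∀ p : X × X, p.1 ∈ S → p.2 ∈ S → f p = dist p.1 p.2)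
    {E : ℕ → Set X} (hEm : ∀ j, MeasurableSet (E j)) (hES : ∀ j, E j ⊆ S)
    (hEd : Pairwise (Function.onFun Disjoint E))
    {ε : ℝ} (hε : 0 < ε) (hdiam : ∀ j, Metric.diam (E j) ≤ ε)
    (hEb : ∀ j, Bornology.IsBounded (E j))
    {x : ℕ → X} (hx : ∀ j, (E j).Nonempty → x j ∈ E j)
    {N : ℕ} (hGμ : μ (⋃ j ∈ Finset.range N, E j)ᶜ ≤ ENNReal.ofReal ε)
    (hGη : η (⋃ j ∈ Finset.range N, E j)ᶜ ≤ ENNReal.ofReal ε) :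
    |∫ p, f p ∂l - ∑ jk ∈ Finset.range N ×ˢ Finset.range N,
        dist (x jk.1) (x jk.2) * (l (E jk.1 ×ˢ E jk.2)).toReal| ≤ 2*ε + C * (2*ε) := by
  have hint : Integrable f l :=
    ⟨hfm.stronglyMeasurable.aestronglyMeasurable,
      HasFiniteIntegral.of_bounded (C := C) (Filter.Eventually.of_forall fun p => by
        rw [Real.norm_eq_abs, abs_of_nonneg (hf0 p)]; exact hfC p)⟩
  set P : Finset (ℕ × ℕ) := Finset.range N ×ˢ Finset.range N with hP
  set t : ℕ × ℕ → Set (X × X) := fun jk => E jk.1 ×ˢ E jk.2 with ht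
  have htm : ∀ jk, MeasurableSet (t jk) := fun jk => (hEm _).prod (hEm _)
  have tdisj : (↑P : Set (ℕ × ℕ)).Pairwise (Function.onFun Disjoint t) := by
    intro a _ b _ hab
    have : a.1 ≠ b.1 ∨ a.2 ≠ b.2 := by
      by_contra hcon
      push_neg at hcon
      exact hab (Prod.ext hcon.1 hcon.2)
    exact Set.disjoint_prod.mpr (this.imp (fun h => hEd h) (fun h => hEd h))
  set A : Set (X × X) := ⋃ jk ∈ P, t jk with hA
  have hAm : MeasurableSet A := P.measurableSet_biUnion fun jk _ => htm jk
  have hsplit : ∫ p, f p ∂l = (∫ p in A, f p ∂l) + ∫ p in Aᶜ, f p ∂l :=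
    (integral_add_compl hAm hint).symm
  have hsum : ∫ p in A, f p ∂l = ∑ jk ∈ P, ∫ p in t jk, f p ∂l :=
    integral_biUnion_finset P (fun jk _ => htm jk) tdisj (fun jk _ => hint.integrableOn)
  have hterm : ∀ jk ∈ P, |(∫ p in t jk, f p ∂l) - dist (x jk.1) (x jk.2) * (l (t jk)).toReal|
      ≤ (2*ε) * (l (t jk)).toReal := by
    rintro ⟨j, k⟩ _
    by_cases hne : (t (j, k)).Nonempty
    · obtain ⟨⟨p1, p2⟩, hp1, hp2⟩ := hne
      have hxj := hx j ⟨p1, hp1⟩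
      have hxk := hx k ⟨p2, hp2⟩
      have hconst : dist (x j) (x k) * (l (t (j,k))).toReal
          = ∫ _ in t (j,k), dist (x j) (x k) ∂l := by
        rw [setIntegral_const, smul_eq_mul, mul_comm]; rfl
      rw [hconst, ← integral_sub hint.integrableOn integrableOn_const]
      rw [← Real.norm_eq_abs]
      refine norm_setIntegral_le_of_norm_le_const (measure_lt_top l _) ?_
      rintro ⟨q1, q2⟩ ⟨hq1, hq2⟩
      have hfq : f (q1, q2) = dist q1 q2 := hfS _ (hES j hq1) (hES k hq2)
      simp only [Real.norm_eq_abs, hfq]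
      have h1 : dist q1 (x j) ≤ ε := (Metric.dist_le_diam_of_mem (hEb j) hq1 hxj).trans (hdiam j)
      have h2 : dist q2 (x k) ≤ ε := (Metric.dist_le_diam_of_mem (hEb k) hq2 hxk).trans (hdiam k)
      calc |dist q1 q2 - dist (x j) (x k)|
          = dist (dist q1 q2) (dist (x j) (x k)) := (Real.dist_eq _ _).symm
        _ ≤ dist q1 (x j) + dist q2 (x k) := dist_dist_dist_le _ _ _ _
        _ ≤ ε + ε := add_le_add h1 h2
        _ = 2 * ε := by ring
    · rw [Set.not_nonempty_iff_eq_empty] at hne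
      rw [hne]
      simp
  have habs1 : |(∫ p in A, f p ∂l) - ∑ jk ∈ P, dist (x jk.1) (x jk.2) * (l (t jk)).toReal|
      ≤ 2*ε := by
    rw [hsum, ← Finset.sum_sub_distrib]
    refine (Finset.abs_sum_le_sum_abs _ _).trans ?_
    refine le_trans (Finset.sum_le_sum hterm) ?_
    rw [← Finset.mul_sum]
    have hsum2 : ∑ jk ∈ P, (l (t jk)).toReal = (l A).toReal := by
      rw [hA, measure_biUnion_finset tdisj (fun jk _ => htm jk), ENNReal.toReal_sum]
      exact fun a _ => measure_ne_top l _
    rw [hsum2]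
    have : (l A).toReal ≤ 1 := by
      rw [← ENNReal.toReal_one]
      exact ENNReal.toReal_mono ENNReal.one_ne_top prob_le_one
    nlinarith
  have htail : |∫ p in Aᶜ, f p ∂l| ≤ C * (2*ε) := by
    have hsub : (⋃ j ∈ Finset.range N, E j) ×ˢ (⋃ j ∈ Finset.range N, E j) ⊆ A := by
      rintro ⟨q1, q2⟩ ⟨hq1, hq2⟩
      simp only [Set.mem_iUnion, Finset.mem_range, exists_prop] at hq1 hq2
      obtain ⟨j, hj, hq1⟩ := hq1
      obtain ⟨k, hk, hq2⟩ := hq2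
      have : ((j, k) : ℕ × ℕ) ∈ P := by simp [hP, Finset.mem_product, hj, hk]
      exact Set.mem_biUnion this (show (q1, q2) ∈ t (j, k) from ⟨hq1, hq2⟩)
    have hlA : l Aᶜ ≤ ENNReal.ofReal ε + ENNReal.ofReal ε := by
      calc l Aᶜ ≤ l (((⋃ j ∈ Finset.range N, E j) ×ˢ (⋃ j ∈ Finset.range N, E j))ᶜ) :=
            measure_mono (compl_subset_compl.mpr hsub)
        _ ≤ μ (⋃ j ∈ Finset.range N, E j)ᶜ + η (⋃ j ∈ Finset.range N, E j)ᶜ :=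
            coupl_compl_prod_le hc (MeasurableSet.biUnion (Finset.range N).countable_toSet
              fun j _ => hEm j) (MeasurableSet.biUnion (Finset.range N).countable_toSet
              fun j _ => hEm j)
        _ ≤ _ := add_le_add hGμ hGη
    have h2 : (l Aᶜ).toReal ≤ 2*ε := by
      have := ENNReal.toReal_mono (by finiteness) hlA
      rwa [ENNReal.toReal_add ENNReal.ofReal_ne_top ENNReal.ofReal_ne_top,
        ENNReal.toReal_ofReal hε.le, ← two_mul] at this
    calc |∫ p in Aᶜ, f p ∂l| ≤ C * (l Aᶜ).toReal := by
          rw [← Real.norm_eq_abs]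
          exact norm_setIntegral_le_of_norm_le_const (measure_lt_top l _)
            (fun p _ => by rw [Real.norm_eq_abs, abs_of_nonneg (hf0 p)]; exact hfC p)
      _ ≤ C * (2*ε) := by nlinarith
  calc |∫ p, f p ∂l - ∑ jk ∈ P, dist (x jk.1) (x jk.2) * (l (t jk)).toReal|
      = |((∫ p in A, f p ∂l) - ∑ jk ∈ P, dist (x jk.1) (x jk.2) * (l (t jk)).toReal)
        + ∫ p in Aᶜ, f p ∂l| := by rw [hsplit]; ring_nf
    _ ≤ |(∫ p in A, f p ∂l) - ∑ jk ∈ P, dist (x jk.1) (x jk.2) * (l (t jk)).toReal|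
        + |∫ p in Aᶜ, f p ∂l| := abs_add_le _ _
    _ ≤ 2*ε + C * (2*ε) := add_le_add habs1 htail

section LAMprops
variable (μ η : Measure X) [IsProbabilityMeasure μ] [IsProbabilityMeasure η]
  (hμt : IsTightM μ) (hηt : IsTightM η) (lam : ℕ → Measure (X × X))
  (hp : ∀ n, IsProbabilityMeasure (lam n)) (hc : ∀ n, IsCoupling (lam n) μ η)

include hμt hηt hp hc in
lemma LAM_prob : IsProbabilityMeasure (LAM lam) := by
  constructor
  have huniv : (univ : Set (X × X)) = (univ : Set X) ×ˢ (univ : Set X) :=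
    (Set.univ_prod_univ).symm
  rw [huniv, LAM_rect μ η hμt hηt lam hc MeasurableSet.univ MeasurableSet.univ]
  refine elim_eq (Tendsto.congr (fun n => ?_) tendsto_const_nhds)
  haveI := hp n
  rw [Set.univ_prod_univ]
  exact measure_univ.symm

include hμt hηt hc in
lemma LAM_coupling : IsCoupling (LAM lam) μ η := by
  constructor
  · refine Measure.ext fun A hA => ?_
    rw [Measure.map_apply measurable_fst hA, ← Set.prod_univ,
      LAM_rect μ η hμt hηt lam hc hA MeasurableSet.univ]
    exact elim_eq (Tendsto.congr (fun n => (coupl_fst (hc n) hA).symm) tendsto_const_nhds)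
  · refine Measure.ext fun A hA => ?_
    rw [Measure.map_apply measurable_snd hA, ← Set.univ_prod,
      LAM_rect μ η hμt hηt lam hc MeasurableSet.univ hA]
    exact elim_eq (Tendsto.congr (fun n => (coupl_snd (hc n) hA).symm) tendsto_const_nhds)

include hμt hηt hc in
lemma LAM_tight : IsTightM (LAM lam) :=
  prod_coupling_tight hμt hηt (LAM_coupling μ η hμt hηt lam hc)

end LAMprops

lemma exists_partition {S : Set X} (hSm : MeasurableSet S)
    (hSsep : TopologicalSpace.IsSeparable S) {ε : ℝ} (hε : 0 < ε) :
    ∃ E : ℕ → Set X, (∀ j, MeasurableSet (E j)) ∧ (∀ j, E j ⊆ S) ∧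
      Pairwise (Function.onFun Disjoint E) ∧ (∀ j, Metric.diam (E j) ≤ ε) ∧
      (∀ j, Bornology.IsBounded (E j)) ∧ (⋃ j, E j) = S := by
  haveI := hSsep.separableSpace
  haveI : SecondCountableTopology ↥S := UniformSpace.secondCountable_of_separable ↥S
  haveI : BorelSpace ↥S := Subtype.borelSpace S
  obtain ⟨As, hAsm, hAsb, hAsd, hAsu, hAspd⟩ :=
    MeasureTheory.SeparableSpace.exists_measurable_partition_diam_le (Ω := ↥S) hε
  refine ⟨fun j => Subtype.val '' As j, fun j => hSm.subtype_image (hAsm j),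
    fun j => by rintro x ⟨y, _, rfl⟩; exact y.2, ?_, ?_, ?_, ?_⟩
  · intro i j hij
    exact Set.disjoint_image_of_injective Subtype.coe_injective (hAspd hij)
  · intro j
    rw [isometry_subtype_coe.diam_image]
    exact hAsd j
  · intro j
    rw [Metric.isBounded_iff_ediam_ne_top, isometry_subtype_coe.ediam_image]
    exact (Metric.isBounded_iff_ediam_ne_top.mp (hAsb j))
  · rw [← Set.image_iUnion, hAsu, Subtype.coe_image_univ]

lemma integral_dist_congr {μ η : Measure X} {l : Measure (X × X)} (hc : IsCoupling l μ η)
    {S : Set X} (hSμ : μ Sᶜ = 0) (hSη : η Sᶜ = 0) (hSm : MeasurableSet S)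
    {f : X × X → ℝ} (hfS : ∀ p : X × X, p.1 ∈ S → p.2 ∈ S → f p = dist p.1 p.2) :
    ∫ p, dist p.1 p.2 ∂l = ∫ p, f p ∂l := by
  refine integral_congr_ae ?_
  have h0 : l ((S ×ˢ S)ᶜ) = 0 :=
    le_antisymm ((coupl_compl_prod_le hc hSm hSm).trans (by simp [hSμ, hSη])) zero_le
  have hsub : {p : X × X | ¬ dist p.1 p.2 = f p} ⊆ (S ×ˢ S)ᶜ := by
    intro p hp hmem
    exact hp (hfS p hmem.1 hmem.2).symm
  exact ae_iff.mpr (measure_mono_null hsub h0)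


end AuxOptimalCoupling

/-- For tight probability measures `μ, η` on a bounded metric space, there is a tight
coupling attaining the infimum in the definition of the Kantorovich distance. -/
theorem stmt11 {X : Type*} [MetricSpace X] [MeasurableSpace X] [BorelSpace X]
    (hbdd : Bornology.IsBounded (Set.univ : Set X))
    (μ η : Measure X) [IsProbabilityMeasure μ] [IsProbabilityMeasure η]
    (hμ : IsTightM μ) (hη : IsTightM η) :
    ∃ l : Measure (X × X), IsProbabilityMeasure l ∧ IsTightM l ∧ IsCoupling l μ η ∧
      ∫ p, dist p.1 p.2 ∂l = kant μ η := by
  classical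
  haveI hXne : Nonempty X := nonempty_of_prob μ
  obtain ⟨C, hC⟩ := Metric.isBounded_iff.mp hbdd
  have hCd : ∀ x y : X, dist x y ≤ C := fun x y => hC trivial trivial
  have hC0 : 0 ≤ C :=
    le_trans dist_nonneg (hCd (Classical.arbitrary X) (Classical.arbitrary X))
  set Sset : Set ℝ := {r | ∃ l : Measure (X × X), IsProbabilityMeasure l ∧ IsTightM l ∧
    IsCoupling l μ η ∧ r = ∫ p, dist p.1 p.2 ∂l} with hSset
  have hkant : kant μ η = sInf Sset := rfl
  have hprodc : IsCoupling (μ.prod η) μ η := by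
    constructor
    · rw [Measure.map_fst_prod]; simp
    · rw [Measure.map_snd_prod]; simp
  have hSne : Sset.Nonempty :=
    ⟨_, μ.prod η, inferInstance, prod_coupling_tight hμ hη hprodc, hprodc, rfl⟩
  have hbdd0 : BddBelow Sset := by
    refine ⟨0, ?_⟩
    rintro r ⟨l, _, _, _, rfl⟩
    exact integral_nonneg fun p => dist_nonneg
  have hseq := fun n : ℕ => Real.lt_sInf_add_pos hSne (show (0:ℝ) < 1/(n+1) by positivity)
  choose a ha hlt using hseq
  choose lam hp htight hcoup heq using ha
  haveI hLp : IsProbabilityMeasure (LAM lam) := LAM_prob μ η hμ hη lam hp hcoup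
  have hLc : IsCoupling (LAM lam) μ η := LAM_coupling μ η hμ hη lam hcoup
  have hLt : IsTightM (LAM lam) := LAM_tight μ η hμ hη lam hcoup
  obtain ⟨S, hScl, hSsep, hSμ, hSη⟩ := exists_conull_separable μ η hμ hη
  obtain ⟨f, hfm, hfS, hf0, hfC⟩ := exists_good_f hScl.measurableSet hSsep hC0 hCd
  have hmain : ∫ p, f p ∂(LAM lam) ≤ sInf Sset := by
    refine le_of_forall_pos_le_add fun ε' hε' => ?_
    have h44 : (0:ℝ) < 4 + 4*C := by positivity
    set ε : ℝ := ε' / (4 + 4*C) with hε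
    have hεpos : 0 < ε := by positivity
    obtain ⟨E, hEm, hES, hEd, hEdiam, hEb, hEU⟩ :=
      exists_partition hScl.measurableSet hSsep hεpos
    set x : ℕ → X := fun j => if h : (E j).Nonempty then h.choose else Classical.arbitrary X
      with hxdef
    have hx : ∀ j, (E j).Nonempty → x j ∈ E j := by
      intro j hj
      rw [hxdef]
      simp only [dif_pos hj]
      exact hj.choose_spec
    set G : ℕ → Set X := fun N => ⋃ j ∈ Finset.range N, E j with hG
    have hGm : ∀ N, MeasurableSet (G N) :=
      fun N => (Finset.range N).measurableSet_biUnion (fun j _ => hEm j)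
    have hanti : Antitone (fun N => (G N)ᶜ) := fun m n hmn =>
      compl_subset_compl.mpr (Set.biUnion_subset_biUnion_left (Finset.range_subset_range.mpr hmn))
    have hInter : ⋂ N, (G N)ᶜ = Sᶜ := by
      rw [← Set.compl_iUnion]
      congr 1
      rw [← hEU]
      ext y
      simp only [hG, Set.mem_iUnion, Finset.mem_range, exists_prop]
      constructor
      · rintro ⟨N, j, hj, hy⟩; exact ⟨j, hy⟩
      · rintro ⟨j, hy⟩; exact ⟨j+1, j, Nat.lt_succ_self j, hy⟩
    have hμt0 : Tendsto (fun N => μ (G N)ᶜ) atTop (𝓝 0) := by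
      have := tendsto_measure_iInter_atTop (μ := μ)
        (fun N => (hGm N).compl.nullMeasurableSet) hanti ⟨0, measure_ne_top _ _⟩
      rwa [hInter, hSμ] at this
    have hηt0 : Tendsto (fun N => η (G N)ᶜ) atTop (𝓝 0) := by
      have := tendsto_measure_iInter_atTop (μ := η)
        (fun N => (hGm N).compl.nullMeasurableSet) hanti ⟨0, measure_ne_top _ _⟩
      rwa [hInter, hSη] at this
    have hκpos : (0:ℝ≥0∞) < ENNReal.ofReal ε := ENNReal.ofReal_pos.mpr hεpos
    obtain ⟨N, hNμ, hNη⟩ :=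
      ((hμt0.eventually_lt_const hκpos).and (hηt0.eventually_lt_const hκpos)).exists
    set bnd : ℝ := 2*ε + C*(2*ε) with hbnd
    have hmLAM := master_approx hLc hfm hf0 hC0 hfC hfS hEm hES hEd hεpos hEdiam hEb hx
      hNμ.le hNη.le
    have hmlam : ∀ n, |∫ p, f p ∂(lam n) - ∑ jk ∈ Finset.range N ×ˢ Finset.range N,
        dist (x jk.1) (x jk.2) * (lam n (E jk.1 ×ˢ E jk.2)).toReal| ≤ bnd := fun n => by
      haveI := hp n
      exact master_approx (hcoup n) hfm hf0 hC0 hfC hfS hEm hES hEd hεpos hEdiam hEb hx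
        hNμ.le hNη.le
    have hSt : Tendsto (fun n => ∑ jk ∈ Finset.range N ×ˢ Finset.range N,
        dist (x jk.1) (x jk.2) * (lam n (E jk.1 ×ˢ E jk.2)).toReal)
        (Ultrafilter.of (atTop : Filter ℕ))
        (𝓝 (∑ jk ∈ Finset.range N ×ˢ Finset.range N,
          dist (x jk.1) (x jk.2) * ((LAM lam) (E jk.1 ×ˢ E jk.2)).toReal)) := by
      refine tendsto_finset_sum _ fun jk _ => ?_
      refine Tendsto.const_mul _ ?_
      have h1 : Tendsto (fun n => lam n (E jk.1 ×ˢ E jk.2)) (Ultrafilter.of (atTop : Filter ℕ))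
          (𝓝 ((LAM lam) (E jk.1 ×ˢ E jk.2))) := by
        rw [LAM_rect μ η hμ hη lam hcoup (hEm _) (hEm _)]
        exact tendsto_elim lam _
      exact (ENNReal.tendsto_toReal (measure_ne_top _ _)).comp h1
    have hub : ∀ n, ∑ jk ∈ Finset.range N ×ˢ Finset.range N,
        dist (x jk.1) (x jk.2) * (lam n (E jk.1 ×ˢ E jk.2)).toReal
        ≤ (sInf Sset + 1/(n+1)) + bnd := by
      intro n
      have h2 := (abs_sub_le_iff.mp (hmlam n)).2
      have h3 : ∫ p, f p ∂(lam n) = a n := by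
        rw [← integral_dist_congr (hcoup n) hSμ hSη hScl.measurableSet hfS, ← heq n]
      have h5 := hlt n
      linarith
    have hSLAM : (∑ jk ∈ Finset.range N ×ˢ Finset.range N,
        dist (x jk.1) (x jk.2) * ((LAM lam) (E jk.1 ×ˢ E jk.2)).toReal)
        ≤ (sInf Sset + 0) + bnd := by
      refine le_of_tendsto_of_tendsto hSt ?_ (Filter.Eventually.of_forall hub)
      exact ((tendsto_const_nhds.add tendsto_one_div_add_atTop_nhds_zero_nat).add
        tendsto_const_nhds).mono_left (Ultrafilter.of_le _)
    have h4 := (abs_sub_le_iff.mp hmLAM).1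
    have harith : 4*ε + C*(4*ε) = ε' := by
      rw [hε]; field_simp
    have hbnd2 : 2 * bnd = 4*ε + C*(4*ε) := by rw [hbnd]; ring
    linarith
  refine ⟨LAM lam, hLp, hLt, hLc, ?_⟩
  have hdist : ∫ p, dist p.1 p.2 ∂(LAM lam) = ∫ p, f p ∂(LAM lam) :=
    integral_dist_congr hLc hSμ hSη hScl.measurableSet hfS
  rw [hkant]
  refine le_antisymm (by rw [hdist]; exact hmain) (csInf_le hbdd0 ⟨LAM lam, hLp, hLt, hLc, rfl⟩)
end

section
/- If d is a complete bounded metric on X, then the Kantorovich metric d̂ on the space of Radon (tight) probability measures on X is complete: every d̂-Cauchy sequence of tight Borel probability measures converges in d̂ to a tight Borel probability measure. -/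
open MeasureTheory
open scoped ENNReal

open Metric Set
set_option linter.unusedSectionVars false

section Surrogate

variable {Y : Type*} [PseudoMetricSpace Y] [MeasurableSpace Y]

lemma meas_closure (hb : ∀ (y : Y) (r : ℝ), MeasurableSet (ball y r))
    {T : Set Y} (hT : T.Countable) : MeasurableSet (closure T) := by
  have h : closure T = ⋂ (n : ℕ), ⋃ t ∈ T, ball t (1 / (n + 1)) := by
    ext x
    simp only [mem_iInter, mem_iUnion, mem_ball]
    constructor
    · intro hx n
      rcases Metric.mem_closure_iff.1 hx (1 / (n + 1)) (by positivity) with ⟨t, ht, hd⟩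
      exact ⟨t, ht, hd⟩
    · intro h
      rw [Metric.mem_closure_iff]
      intro ε hε
      rcases exists_nat_one_div_lt hε with ⟨n, hn⟩
      rcases h n with ⟨t, ht, hd⟩
      exact ⟨t, ht, hd.trans hn⟩
  rw [h]
  exact MeasurableSet.iInter fun n => MeasurableSet.biUnion hT fun t _ => hb t _

lemma meas_closure_inter_open (hb : ∀ (y : Y) (r : ℝ), MeasurableSet (ball y r))
    {T : Set Y} (hT : T.Countable) {U : Set Y} (hU : IsOpen U) :
    MeasurableSet (closure T ∩ U) := by
  classical
  have h : closure T ∩ U = closure T ∩ ⋃ p ∈ {p : Y × ℚ | p.1 ∈ T ∧ ball p.1 (p.2 : ℝ) ⊆ U},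
      ball p.1 (p.2 : ℝ) := by
    ext x
    simp only [mem_inter_iff, mem_iUnion, mem_setOf_eq]
    constructor
    · rintro ⟨hxT, hxU⟩
      refine ⟨hxT, ?_⟩
      rcases Metric.isOpen_iff.1 hU x hxU with ⟨ε, hε, hball⟩
      rcases exists_rat_btwn (by linarith : (0:ℝ) < ε / 2) with ⟨q, hq0, hq⟩
      rcases Metric.mem_closure_iff.1 hxT (q : ℝ) hq0 with ⟨t, ht, hd⟩
      refine ⟨(t, q), ⟨ht, fun z hz => hball ?_⟩, ?_⟩
      · have : dist z x ≤ dist z t + dist x t := by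
          rw [dist_comm x t]; exact dist_triangle z t x
        simp only [mem_ball] at hz ⊢
        calc dist z x ≤ dist z t + dist x t := this
          _ < q + q := by exact add_lt_add hz hd
          _ < ε := by linarith
      · simpa [mem_ball, dist_comm] using hd
    · rintro ⟨hxT, ⟨p, ⟨_, hsub⟩, hx⟩⟩
      exact ⟨hxT, hsub hx⟩
  rw [h]
  have hcnt : ({p : Y × ℚ | p.1 ∈ T ∧ ball p.1 (p.2 : ℝ) ⊆ U}).Countable :=
    (hT.prod (Set.countable_univ (α := ℚ))).mono
      (fun p hp => Set.mem_prod.2 ⟨hp.1, Set.mem_univ _⟩)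
  exact (meas_closure hb hT).inter <| MeasurableSet.biUnion hcnt fun p _ => hb p.1 _

lemma exists_surrogate (hb : ∀ (y : Y) (r : ℝ), MeasurableSet (ball y r))
    {T : Set Y} (hT : T.Countable) {φ : Y → ℝ} (hφ : Continuous φ) (hφ0 : ∀ y, 0 ≤ φ y) :
    ∃ g : Y → ℝ, Measurable g ∧ (∀ y, 0 ≤ g y ∧ g y ≤ φ y) ∧
      ∀ y ∈ closure T, g y = φ y := by
  classical
  refine ⟨(closure T).indicator φ, ?_, ?_, ?_⟩
  · apply measurable_of_Iio
    intro a
    have h : (closure T).indicator φ ⁻¹' Iio a =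
        (closure T ∩ φ ⁻¹' Iio a) ∪ (if (0:ℝ) < a then (closure T)ᶜ else ∅) := by
      ext y
      by_cases hy : y ∈ closure T <;> by_cases h0 : (0:ℝ) < a <;>
        simp [Set.indicator, hy, h0, mem_Iio]
    rw [h]
    refine (meas_closure_inter_open hb hT (isOpen_lt hφ continuous_const)).union ?_
    split_ifs
    · exact (meas_closure hb hT).compl
    · exact MeasurableSet.empty
  · intro y
    by_cases hy : y ∈ closure T <;> simp [Set.indicator, hy, hφ0 y, le_refl]
  · intro y hy; simp [Set.indicator, hy]

end Surrogate


/-- concentration on a separable set -/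
def Conc {Y : Type*} [PseudoMetricSpace Y] [MeasurableSpace Y] (l : Measure Y) : Prop :=
  ∃ T : Set Y, T.Countable ∧ l (closure T)ᶜ = 0

section Main

variable {X : Type*} [MetricSpace X] [MeasurableSpace X] [BorelSpace X]

lemma ballXX_meas : ∀ (p : X × X) (r : ℝ), MeasurableSet (ball p r) := fun p r => by
  rw [← ball_prod_same]
  exact measurableSet_ball.prod measurableSet_ball

lemma conc_of_tight {μ : Measure X} (h : IsTightM μ) : Conc μ := by
  have h1 : ∀ n : ℕ, ∃ K : Set X, IsCompact K ∧ μ Kᶜ ≤ ((n : ℝ≥0∞) + 1)⁻¹ := by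
    intro n
    exact h _ (by simp)
  choose K hKc hKm using h1
  have h2 : ∀ n : ℕ, ∃ c : Set X, c.Countable ∧ K n ⊆ closure c := fun n => (hKc n).isSeparable
  choose c hc hsub using h2
  refine ⟨⋃ n, c n, countable_iUnion hc, ?_⟩
  by_contra h0
  rcases ENNReal.exists_inv_nat_lt h0 with ⟨n, hn⟩
  have hle : μ (closure (⋃ n, c n))ᶜ ≤ ((n : ℝ≥0∞) + 1)⁻¹ := by
    refine le_trans (measure_mono (compl_subset_compl.2 ?_)) (hKm n)
    exact (hsub n).trans (closure_mono (subset_iUnion c n))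
  have : ((n : ℝ≥0∞) + 1)⁻¹ ≤ ((n : ℝ≥0∞))⁻¹ :=
    ENNReal.inv_le_inv.2 (le_add_of_nonneg_right zero_le_one)
  exact absurd (hn.trans_le (hle.trans this)) (lt_irrefl _)

lemma conc_coupling {l : Measure (X × X)} {μ η : Measure X}
    (hc : IsCoupling l μ η) (h1 : Conc μ) (h2 : Conc η) : Conc l := by
  obtain ⟨T₁, hT₁, hm₁⟩ := h1
  obtain ⟨T₂, hT₂, hm₂⟩ := h2
  refine ⟨T₁ ×ˢ T₂, hT₁.prod hT₂, ?_⟩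
  rw [closure_prod_eq]
  have hsub : (closure T₁ ×ˢ closure T₂)ᶜ ⊆
      (Prod.fst ⁻¹' (closure T₁)ᶜ) ∪ (Prod.snd ⁻¹' (closure T₂)ᶜ) := by
    intro p hp
    simp only [mem_compl_iff, mem_prod, not_and_or] at hp
    rcases hp with h | h
    · exact Or.inl h
    · exact Or.inr h
  refine le_antisymm (le_trans (measure_mono hsub) ?_) zero_le
  refine le_trans (measure_union_le _ _) ?_
  rw [← Measure.map_apply measurable_fst isClosed_closure.measurableSet.compl,
    ← Measure.map_apply measurable_snd isClosed_closure.measurableSet.compl, hc.1, hc.2,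
    hm₁, hm₂, add_zero]

lemma coupling_tight {l : Measure (X × X)} {μ η : Measure X}
    (hc : IsCoupling l μ η) (h1 : IsTightM μ) (h2 : IsTightM η) : IsTightM l := by
  intro ε hε
  have hε2 : (0 : ℝ≥0∞) < ε / 2 := ENNReal.half_pos hε.ne'
  obtain ⟨K₁, hK₁c, hK₁m⟩ := h1 _ hε2
  obtain ⟨K₂, hK₂c, hK₂m⟩ := h2 _ hε2
  refine ⟨K₁ ×ˢ K₂, hK₁c.prod hK₂c, ?_⟩
  have hsub : (K₁ ×ˢ K₂)ᶜ ⊆ (Prod.fst ⁻¹' K₁ᶜ) ∪ (Prod.snd ⁻¹' K₂ᶜ) := by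
    intro p hp
    simp only [mem_compl_iff, mem_prod, not_and_or] at hp
    rcases hp with h | h
    · exact Or.inl h
    · exact Or.inr h
  refine le_trans (measure_mono hsub) (le_trans (measure_union_le _ _) ?_)
  rw [← Measure.map_apply measurable_fst hK₁c.isClosed.measurableSet.compl,
    ← Measure.map_apply measurable_snd hK₂c.isClosed.measurableSet.compl, hc.1, hc.2]
  calc μ K₁ᶜ + η K₂ᶜ ≤ ε / 2 + ε / 2 := add_le_add hK₁m hK₂m
    _ = ε := ENNReal.add_halves ε

lemma tight_of_finset_supp {μ : Measure X} (F : Finset X) (h : μ (↑F : Set X)ᶜ = 0) :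
    IsTightM μ := fun ε _ => ⟨F, F.finite_toSet.isCompact, by rw [h]; exact zero_le⟩

lemma coupling_supp_finset {l : Measure (X × X)} {μ η : Measure X} {F₁ F₂ : Finset X}
    (hc : IsCoupling l μ η) (h1 : μ (↑F₁ : Set X)ᶜ = 0) (h2 : η (↑F₂ : Set X)ᶜ = 0) :
    l (↑(F₁ ×ˢ F₂) : Set (X × X))ᶜ = 0 := by
  rw [Finset.coe_product]
  have hsub : ((↑F₁ : Set X) ×ˢ (↑F₂ : Set X))ᶜ ⊆
      (Prod.fst ⁻¹' (↑F₁ : Set X)ᶜ) ∪ (Prod.snd ⁻¹' (↑F₂ : Set X)ᶜ) := by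
    intro p hp
    simp only [mem_compl_iff, mem_prod, not_and_or] at hp
    rcases hp with h | h
    · exact Or.inl h
    · exact Or.inr h
  refine le_antisymm (le_trans (measure_mono hsub) (le_trans (measure_union_le _ _) ?_))
    zero_le
  rw [← Measure.map_apply measurable_fst (F₁.measurableSet).compl,
    ← Measure.map_apply measurable_snd (F₂.measurableSet).compl, hc.1, hc.2, h1, h2, add_zero]

lemma kant_bddBelow {α : Type*} [PseudoMetricSpace α] [MeasurableSpace α] (μ η : Measure α) :
    BddBelow {r | ∃ l : Measure (α × α), IsProbabilityMeasure l ∧ IsTightM l ∧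
      IsCoupling l μ η ∧ r = ∫ p, dist p.1 p.2 ∂l} := by
  refine ⟨0, fun r hr => ?_⟩
  obtain ⟨l, _, _, _, rfl⟩ := hr
  exact integral_nonneg fun p => dist_nonneg

lemma kant_nonneg {α : Type*} [PseudoMetricSpace α] [MeasurableSpace α] (μ η : Measure α) :
    0 ≤ kant μ η := by
  refine Real.sInf_nonneg fun r hr => ?_
  obtain ⟨l, _, _, _, rfl⟩ := hr
  exact integral_nonneg fun p => dist_nonneg

lemma kant_le {μ η : Measure X} {l : Measure (X × X)} (h1 : IsProbabilityMeasure l)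
    (h2 : IsTightM l) (h3 : IsCoupling l μ η) : kant μ η ≤ ∫ p, dist p.1 p.2 ∂l :=
  csInf_le (kant_bddBelow μ η) ⟨l, h1, h2, h3, rfl⟩

lemma exists_coupling_lt {μ η : Measure X} [IsProbabilityMeasure μ] [IsProbabilityMeasure η]
    (hμ : IsTightM μ) (hη : IsTightM η) {ε : ℝ} (h : kant μ η < ε) :
    ∃ l : Measure (X × X), IsProbabilityMeasure l ∧ IsTightM l ∧ IsCoupling l μ η ∧
      ∫ p, dist p.1 p.2 ∂l < ε := by
  have hcoup : IsCoupling (μ.prod η) μ η := by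
    constructor
    · rw [Measure.map_fst_prod, measure_univ, one_smul]
    · rw [Measure.map_snd_prod, measure_univ, one_smul]
  have hne : {r | ∃ l : Measure (X × X), IsProbabilityMeasure l ∧ IsTightM l ∧
      IsCoupling l μ η ∧ r = ∫ p, dist p.1 p.2 ∂l}.Nonempty :=
    ⟨_, μ.prod η, inferInstance, coupling_tight hcoup hμ hη, hcoup, rfl⟩
  obtain ⟨r, ⟨l, hp, ht, hcp, rfl⟩, hlt⟩ := exists_lt_of_csInf_lt hne h
  exact ⟨l, hp, ht, hcp, hlt⟩

lemma cost_conv {l : Measure (X × X)} [IsFiniteMeasure l] (hc : Conc l) :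
    ∫ p, dist p.1 p.2 ∂l = (∫⁻ p, edist p.1 p.2 ∂l).toReal := by
  obtain ⟨T, hT, hm⟩ := hc
  obtain ⟨g, hgm, hgb, hge⟩ := exists_surrogate ballXX_meas hT
    (φ := fun p : X × X => dist p.1 p.2) (continuous_fst.dist continuous_snd)
    (fun p => dist_nonneg)
  have hae : g =ᵐ[l] fun p : X × X => dist p.1 p.2 := by
    refine measure_mono_null (fun p hp => ?_) hm
    simp only [mem_compl_iff]
    intro hcl
    exact hp (hge p hcl)
  rw [integral_congr_ae hae.symm,
    integral_eq_lintegral_of_nonneg_ae (Filter.Eventually.of_forall fun p => (hgb p).1)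
      hgm.aestronglyMeasurable]
  congr 1
  refine lintegral_congr_ae ?_
  filter_upwards [hae] with p hp
  rw [hp, ← edist_dist]

lemma cost_ne_top {l : Measure (X × X)} [IsFiniteMeasure l] {D : ℝ}
    (hD : ∀ x y : X, dist x y ≤ D) : ∫⁻ p, edist p.1 p.2 ∂l ≠ ⊤ := by
  have hb : ∀ p : X × X, edist p.1 p.2 ≤ ENNReal.ofReal D := by
    intro p
    rw [edist_dist]
    exact ENNReal.ofReal_le_ofReal (hD _ _)
  refine ne_top_of_le_ne_top ?_ (lintegral_mono hb)
  rw [lintegral_const]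
  exact ENNReal.mul_ne_top ENNReal.ofReal_ne_top (measure_ne_top l univ)

end Main
section Glue

variable {X : Type*} [MetricSpace X] [MeasurableSpace X] [BorelSpace X]

lemma map_finset_sum' {ι α β : Type*} {mα : MeasurableSpace α} {mβ : MeasurableSpace β}
    (s : Finset ι) (μ : ι → Measure α) {f : α → β} (hf : Measurable f) :
    (∑ i ∈ s, μ i).map f = ∑ i ∈ s, (μ i).map f := by
  ext A hA
  rw [Measure.map_apply hf hA, Measure.finset_sum_apply, Measure.finset_sum_apply]
  exact Finset.sum_congr rfl fun i _ => (Measure.map_apply hf hA).symm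

lemma restrict_sum_snd (α : Measure (X × X)) (F : Finset X) :
    ∑ y ∈ F, α.restrict (univ ×ˢ ({y} : Set X)) = α.restrict (univ ×ˢ (↑F : Set X)) := by
  ext A hA
  rw [Measure.finset_sum_apply, Measure.restrict_apply hA]
  have hset : A ∩ univ ×ˢ (↑F : Set X) = ⋃ y ∈ F, A ∩ univ ×ˢ ({y} : Set X) := by
    ext p
    simp only [mem_inter_iff, mem_prod, mem_univ, true_and, mem_iUnion, Finset.mem_coe,
      mem_singleton_iff]
    constructor
    · rintro ⟨hp, hy⟩; exact ⟨p.2, hy, hp, rfl⟩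
    · rintro ⟨y, hy, hp, rfl⟩; exact ⟨hp, hy⟩
  rw [hset, measure_biUnion_finset]
  · exact Finset.sum_congr rfl fun y _ => Measure.restrict_apply hA
  · intro y _ z _ hyz
    refine Set.disjoint_left.2 fun p hp hp' => hyz ?_
    have h1 := hp.2.2; have h2 := hp'.2.2
    simp only [mem_singleton_iff] at h1 h2
    rw [← h1, ← h2]
  · exact fun y _ => hA.inter (MeasurableSet.univ.prod (measurableSet_singleton y))

lemma restrict_sum_fst (β : Measure (X × X)) (F : Finset X) :
    ∑ y ∈ F, β.restrict (({y} : Set X) ×ˢ univ) = β.restrict ((↑F : Set X) ×ˢ univ) := by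
  ext A hA
  rw [Measure.finset_sum_apply, Measure.restrict_apply hA]
  have hset : A ∩ (↑F : Set X) ×ˢ univ = ⋃ y ∈ F, A ∩ ({y} : Set X) ×ˢ univ := by
    ext p
    simp only [mem_inter_iff, mem_prod, mem_univ, and_true, mem_iUnion, Finset.mem_coe,
      mem_singleton_iff]
    constructor
    · rintro ⟨hp, hy⟩; exact ⟨p.1, hy, hp, rfl⟩
    · rintro ⟨y, hy, hp, rfl⟩; exact ⟨hp, hy⟩
  rw [hset, measure_biUnion_finset]
  · exact Finset.sum_congr rfl fun y _ => Measure.restrict_apply hA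
  · intro y _ z _ hyz
    refine Set.disjoint_left.2 fun p hp hp' => hyz ?_
    have h1 := hp.2.1; have h2 := hp'.2.1
    simp only [mem_singleton_iff] at h1 h2
    rw [← h1, ← h2]
  · exact fun y _ => hA.inter ((measurableSet_singleton y).prod MeasurableSet.univ)

lemma prob_of_coupling {l : Measure (X × X)} {θ ρ : Measure X} [IsProbabilityMeasure θ]
    (hc : IsCoupling l θ ρ) : IsProbabilityMeasure l := by
  constructor
  have h : l univ = θ univ := by
    rw [← hc.1, Measure.map_apply measurable_fst MeasurableSet.univ, preimage_univ]
  rw [h, measure_univ]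

lemma glue_atomic {θ η ρ : Measure X} [IsFiniteMeasure θ] [IsFiniteMeasure η]
    [IsFiniteMeasure ρ] (F : Finset X) (hF : η (↑F : Set X)ᶜ = 0)
    {α β : Measure (X × X)} [IsFiniteMeasure α] [IsFiniteMeasure β]
    (hα : IsCoupling α θ η) (hβ : IsCoupling β η ρ) :
    ∃ l : Measure (X × X), IsCoupling l θ ρ ∧
      ∫⁻ p, edist p.1 p.2 ∂l ≤ ∫⁻ p, edist p.1 p.2 ∂α + ∫⁻ p, edist p.1 p.2 ∂β := by
  classical
  set m1 : X → Measure X := fun y => (α.restrict (univ ×ˢ ({y} : Set X))).map Prod.fst with hm1def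
  set m2 : X → Measure X := fun y => (β.restrict (({y} : Set X) ×ˢ univ)).map Prod.snd with hm2def
  have hm1univ : ∀ y : X, m1 y univ = η {y} := by
    intro y
    rw [hm1def]
    simp only
    rw [Measure.map_apply measurable_fst MeasurableSet.univ, preimage_univ,
      Measure.restrict_apply_univ]
    rw [Set.univ_prod, ← Measure.map_apply measurable_snd (measurableSet_singleton y), hα.2]
  have hm2univ : ∀ y : X, m2 y univ = η {y} := by
    intro y
    rw [hm2def]
    simp only
    rw [Measure.map_apply measurable_snd MeasurableSet.univ, preimage_univ,
      Measure.restrict_apply_univ]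
    rw [Set.prod_univ, ← Measure.map_apply measurable_fst (measurableSet_singleton y), hβ.1]
  haveI hfin1 : ∀ y : X, IsFiniteMeasure (m1 y) := by
    intro y; constructor; rw [hm1univ y]; exact measure_lt_top η _
  haveI hfin2 : ∀ y : X, IsFiniteMeasure (m2 y) := by
    intro y; constructor; rw [hm2univ y]; exact measure_lt_top η _
  set l : Measure (X × X) := ∑ y ∈ F, (η {y})⁻¹ • ((m1 y).prod (m2 y)) with hldef
  -- some support facts
  have hαsupp : α ((univ ×ˢ (↑F : Set X))ᶜ) = 0 := by
    rw [Set.univ_prod, ← Set.preimage_compl,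
      ← Measure.map_apply measurable_snd F.measurableSet.compl, hα.2]; exact hF
  have hβsupp : β (((↑F : Set X) ×ˢ univ)ᶜ) = 0 := by
    rw [Set.prod_univ, ← Set.preimage_compl,
      ← Measure.map_apply measurable_fst F.measurableSet.compl, hβ.1]; exact hF
  have hαres : α.restrict (univ ×ˢ (↑F : Set X)) = α :=
    Measure.restrict_eq_self_of_ae_mem (mem_ae_iff.2 hαsupp)
  have hβres : β.restrict ((↑F : Set X) ×ˢ univ) = β :=
    Measure.restrict_eq_self_of_ae_mem (mem_ae_iff.2 hβsupp)
  have hsum1 : ∑ y ∈ F, m1 y = θ := by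
    rw [hm1def]
    simp only
    rw [← map_finset_sum' F _ measurable_fst, restrict_sum_snd, hαres, hα.1]
  have hsum2 : ∑ y ∈ F, m2 y = ρ := by
    rw [hm2def]
    simp only
    rw [← map_finset_sum' F _ measurable_snd, restrict_sum_fst, hβres, hβ.2]
  refine ⟨l, ⟨?_, ?_⟩, ?_⟩
  · -- fst marginal
    rw [hldef, map_finset_sum' F _ measurable_fst, ← hsum1]
    refine Finset.sum_congr rfl fun y _ => ?_
    rw [Measure.map_smul, Measure.map_fst_prod, hm2univ y]
    by_cases hy : η {y} = 0
    · have h0 : m1 y = 0 := Measure.measure_univ_eq_zero.1 (by rw [hm1univ y, hy])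
      rw [hy, h0]; simp
    · rw [smul_smul, ENNReal.inv_mul_cancel hy (measure_ne_top η _), one_smul]
  · -- snd marginal
    rw [hldef, map_finset_sum' F _ measurable_snd, ← hsum2]
    refine Finset.sum_congr rfl fun y _ => ?_
    rw [Measure.map_smul, Measure.map_snd_prod, hm1univ y]
    by_cases hy : η {y} = 0
    · have h0 : m2 y = 0 := Measure.measure_univ_eq_zero.1 (by rw [hm2univ y, hy])
      rw [hy, h0]; simp
    · rw [smul_smul, ENNReal.inv_mul_cancel hy (measure_ne_top η _), one_smul]
  · -- cost bound
    have hml : ∀ y : X, Measurable fun x : X => edist x y := fun y =>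
      (continuous_id.edist continuous_const).measurable
    have hmr : ∀ y : X, Measurable fun z : X => edist y z := fun y =>
      (continuous_const.edist continuous_id).measurable
    have hmeasA : ∀ y : X, Measurable fun p : X × X => edist p.1 y := fun y =>
      (hml y).comp measurable_fst
    have hmeasB : ∀ y : X, Measurable fun p : X × X => edist y p.2 := fun y =>
      (hmr y).comp measurable_snd
    set I1 : X → ℝ≥0∞ := fun y => ∫⁻ x, edist x y ∂(m1 y) with hI1def
    set I2 : X → ℝ≥0∞ := fun y => ∫⁻ z, edist y z ∂(m2 y) with hI2def
    have hterm : ∀ y ∈ F, (η {y})⁻¹ * ∫⁻ p, edist p.1 p.2 ∂((m1 y).prod (m2 y)) ≤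
        I1 y + I2 y := by
      intro y _
      by_cases hy : η {y} = 0
      · have h0 : m1 y = 0 := Measure.measure_univ_eq_zero.1 (by rw [hm1univ y, hy])
        rw [h0, Measure.zero_prod, lintegral_zero_measure, mul_zero]
        exact zero_le
      · have hstep : ∫⁻ p, edist p.1 p.2 ∂((m1 y).prod (m2 y)) ≤
            η {y} * I1 y + η {y} * I2 y := by
          have hmono : ∫⁻ p, edist p.1 p.2 ∂((m1 y).prod (m2 y)) ≤
              ∫⁻ p : X × X, (edist p.1 y + edist y p.2) ∂((m1 y).prod (m2 y)) :=
            lintegral_mono fun p => edist_triangle _ _ _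
          rw [lintegral_add_left (hmeasA y)] at hmono
          have hA : ∫⁻ p : X × X, edist p.1 y ∂((m1 y).prod (m2 y)) = η {y} * I1 y := by
            have := lintegral_map (μ := (m1 y).prod (m2 y)) (f := fun x : X => edist x y)
              (g := Prod.fst) (hml y) measurable_fst
            rw [← this, Measure.map_fst_prod, lintegral_smul_measure, hm2univ y, hI1def, smul_eq_mul]
          have hB : ∫⁻ p : X × X, edist y p.2 ∂((m1 y).prod (m2 y)) = η {y} * I2 y := by
            have := lintegral_map (μ := (m1 y).prod (m2 y)) (f := fun z : X => edist y z)
              (g := Prod.snd) (hmr y) measurable_snd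
            rw [← this, Measure.map_snd_prod, lintegral_smul_measure, hm1univ y, hI2def, smul_eq_mul]
          rw [hA, hB] at hmono
          exact hmono
        calc (η {y})⁻¹ * ∫⁻ p, edist p.1 p.2 ∂((m1 y).prod (m2 y)) ≤
            (η {y})⁻¹ * (η {y} * I1 y + η {y} * I2 y) := by
              exact mul_le_mul_right hstep _
          _ = ((η {y})⁻¹ * η {y}) * (I1 y + I2 y) := by ring
          _ = I1 y + I2 y := by
              rw [ENNReal.inv_mul_cancel hy (measure_ne_top η _), one_mul]
    have hI1sum : ∑ y ∈ F, I1 y ≤ ∫⁻ p, edist p.1 p.2 ∂α := by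
      have heq : ∀ y ∈ F, I1 y = ∫⁻ p, edist p.1 p.2 ∂(α.restrict (univ ×ˢ ({y} : Set X))) := by
        intro y _
        rw [hI1def]
        simp only
        rw [hm1def]
        simp only
        rw [lintegral_map (f := fun x : X => edist x y) (hml y) measurable_fst]
        refine lintegral_congr_ae ?_
        have hae : ∀ᵐ p ∂(α.restrict (univ ×ˢ ({y} : Set X))), p.2 = y := by
          rw [MeasureTheory.ae_iff]
          rw [Measure.restrict_apply]
          · convert measure_empty (μ := α)
            ext p; simp only [mem_inter_iff, mem_setOf_eq, mem_prod, mem_univ, true_and,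
              mem_singleton_iff, mem_empty_iff_false, iff_false, not_and]
            intro h h2; exact h h2
          · exact (measurableSet_singleton y).compl.preimage measurable_snd
        filter_upwards [hae] with p hp
        rw [hp]
      rw [Finset.sum_congr rfl heq, ← lintegral_finset_sum_measure, restrict_sum_snd, hαres]
    have hI2sum : ∑ y ∈ F, I2 y ≤ ∫⁻ p, edist p.1 p.2 ∂β := by
      have heq : ∀ y ∈ F, I2 y = ∫⁻ p, edist p.1 p.2 ∂(β.restrict (({y} : Set X) ×ˢ univ)) := by
        intro y _
        rw [hI2def]
        simp only
        rw [hm2def]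
        simp only
        rw [lintegral_map (f := fun z : X => edist y z) (hmr y) measurable_snd]
        refine lintegral_congr_ae ?_
        have hae : ∀ᵐ p ∂(β.restrict (({y} : Set X) ×ˢ univ)), p.1 = y := by
          rw [MeasureTheory.ae_iff]
          rw [Measure.restrict_apply]
          · convert measure_empty (μ := β)
            ext p; simp only [mem_inter_iff, mem_setOf_eq, mem_prod, mem_univ, and_true,
              mem_singleton_iff, mem_empty_iff_false, iff_false, not_and]
            intro h h2; exact h h2
          · exact (measurableSet_singleton y).compl.preimage measurable_fst
        filter_upwards [hae] with p hp
        rw [hp]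
      rw [Finset.sum_congr rfl heq, ← lintegral_finset_sum_measure, restrict_sum_fst, hβres]
    calc ∫⁻ p, edist p.1 p.2 ∂l
        = ∑ y ∈ F, (η {y})⁻¹ * ∫⁻ p, edist p.1 p.2 ∂((m1 y).prod (m2 y)) := by
          rw [hldef, lintegral_finset_sum_measure]
          exact Finset.sum_congr rfl fun y _ => lintegral_smul_measure _ _
      _ ≤ ∑ y ∈ F, (I1 y + I2 y) := Finset.sum_le_sum hterm
      _ = ∑ y ∈ F, I1 y + ∑ y ∈ F, I2 y := Finset.sum_add_distrib
      _ ≤ ∫⁻ p, edist p.1 p.2 ∂α + ∫⁻ p, edist p.1 p.2 ∂β := add_le_add hI1sum hI2sum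

end Glue
section Round

variable {X : Type*} [MetricSpace X] [MeasurableSpace X] [BorelSpace X]

noncomputable def pickL (x₀ : X) (r : ℝ) : List X → X → X
  | [] => fun _ => x₀
  | (y :: l) => fun x => if dist x y < r then y else pickL x₀ r l x

lemma pickL_measurable (x₀ : X) (r : ℝ) : ∀ l : List X, Measurable (pickL x₀ r l)
  | [] => measurable_const
  | (y :: l) => by
    simp only [pickL]
    exact Measurable.ite (by simpa [ball] using (measurableSet_ball (x := y) (ε := r)))
      measurable_const (pickL_measurable x₀ r l)

lemma pickL_mem (x₀ : X) (r : ℝ) : ∀ (l : List X) (x : X),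
    pickL x₀ r l x = x₀ ∨ pickL x₀ r l x ∈ l
  | [], x => Or.inl rfl
  | (y :: l), x => by
    simp only [pickL]
    split_ifs with h
    · exact Or.inr (List.mem_cons_self)
    · rcases pickL_mem x₀ r l x with h' | h'
      · exact Or.inl h'
      · exact Or.inr (List.mem_cons_of_mem y h')

lemma pickL_close (x₀ : X) (r : ℝ) : ∀ (l : List X) (x : X),
    (∃ y ∈ l, dist x y < r) → dist x (pickL x₀ r l x) < r
  | [], x => by rintro ⟨y, hy, -⟩; simp at hy
  | (y :: l), x => by
    rintro ⟨z, hz, hd⟩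
    simp only [pickL]
    split_ifs with h
    · exact h
    · refine pickL_close x₀ r l x ⟨z, ?_, hd⟩
      rcases List.mem_cons.1 hz with rfl | h'
      · exact absurd hd h
      · exact h'

lemma exists_round (μ : Measure X) [IsProbabilityMeasure μ] (ht : IsTightM μ) {ε D : ℝ}
    (hε : 0 < ε) (hD : ∀ x y : X, dist x y ≤ D) (x₀ : X) :
    ∃ T : X → X, Measurable T ∧ (Set.range T).Finite ∧
      ∫⁻ x, edist x (T x) ∂μ ≤ ENNReal.ofReal ε := by
  have hD0 : 0 ≤ D := le_trans dist_nonneg (hD x₀ x₀)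
  obtain ⟨K, hKc, hKm⟩ := ht (ENNReal.ofReal (ε / (2 * (D + 1))))
    (ENNReal.ofReal_pos.2 (by positivity))
  obtain ⟨t, hcover⟩ := hKc.elim_finite_subcover (fun y : X => ball y (ε / 2))
    (fun y => isOpen_ball) (fun x hx => mem_iUnion.2 ⟨x, mem_ball_self (by positivity)⟩)
  set T := pickL x₀ (ε / 2) t.toList with hT
  refine ⟨T, pickL_measurable _ _ _, ?_, ?_⟩
  · refine (t.finite_toSet.insert x₀).subset ?_
    rintro y ⟨x, rfl⟩
    rcases pickL_mem x₀ (ε / 2) t.toList x with h | h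
    · exact h ▸ mem_insert _ _
    · exact mem_insert_of_mem _ (Finset.mem_toList.1 h)
  · have hK : ∀ x ∈ K, edist x (T x) ≤ ENNReal.ofReal (ε / 2) := by
      intro x hx
      rcases mem_iUnion₂.1 (hcover hx) with ⟨y, hy, hxy⟩
      have : dist x (T x) < ε / 2 :=
        pickL_close x₀ (ε / 2) t.toList x ⟨y, Finset.mem_toList.2 hy, mem_ball.1 hxy⟩
      rw [edist_dist]
      exact ENNReal.ofReal_le_ofReal this.le
    have hAll : ∀ x : X, edist x (T x) ≤ ENNReal.ofReal (D + 1) := by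
      intro x
      rw [edist_dist]
      exact ENNReal.ofReal_le_ofReal ((hD _ _).trans (by linarith))
    have hsplit := lintegral_add_compl (fun x => edist x (T x)) hKc.isClosed.measurableSet
      (μ := μ)
    rw [← hsplit]
    have h1 : ∫⁻ x in K, edist x (T x) ∂μ ≤ ENNReal.ofReal (ε / 2) := by
      refine le_trans (setLIntegral_mono' hKc.isClosed.measurableSet hK) ?_
      rw [setLIntegral_const]
      exact le_trans (mul_le_mul_right prob_le_one _) (by rw [mul_one])
    have h2 : ∫⁻ x in Kᶜ, edist x (T x) ∂μ ≤ ENNReal.ofReal (ε / 2) := by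
      refine le_trans (setLIntegral_mono' hKc.isClosed.measurableSet.compl
        (fun x _ => hAll x)) ?_
      rw [setLIntegral_const]
      refine le_trans (mul_le_mul_right hKm _) ?_
      rw [← ENNReal.ofReal_mul (by positivity)]
      refine ENNReal.ofReal_le_ofReal (le_of_eq ?_)
      field_simp
    calc ∫⁻ x in K, edist x (T x) ∂μ + ∫⁻ x in Kᶜ, edist x (T x) ∂μ
        ≤ ENNReal.ofReal (ε / 2) + ENNReal.ofReal (ε / 2) := add_le_add h1 h2
      _ = ENNReal.ofReal ε := by rw [← ENNReal.ofReal_add (by positivity) (by positivity)]; ring_nf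

lemma measurable_edist_pair {Ω : Type*} {mΩ : MeasurableSpace Ω} {f g : Ω → X}
    (hf : Measurable f) (hfr : (Set.range f).Finite) (hg : Measurable g) :
    Measurable fun ω => edist (f ω) (g ω) := by
  classical
  have heq : (fun ω => edist (f ω) (g ω)) =
      fun ω => ∑ y ∈ hfr.toFinset, if f ω = y then edist y (g ω) else 0 := by
    funext ω
    rw [Finset.sum_ite_eq hfr.toFinset (f ω) (fun y => edist y (g ω)),
      if_pos (hfr.mem_toFinset.2 (Set.mem_range_self ω))]
  rw [heq]
  refine Finset.measurable_sum _ fun y _ => ?_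
  refine Measurable.ite (hf (measurableSet_singleton y)) ?_ measurable_const
  exact ((continuous_const.edist continuous_id).measurable).comp hg

end Round
section Partition

noncomputable def mIco : Measure ℝ := volume.restrict (Set.Ico (0:ℝ) 1)

instance : IsProbabilityMeasure mIco := by
  constructor
  rw [mIco, Measure.restrict_apply_univ, Real.volume_Ico]
  norm_num

lemma mIco_le_volume (E : Set ℝ) : mIco E ≤ volume E := by
  rw [mIco]
  exact Measure.restrict_le_self E

lemma exists_partition_s15 {ι : Type*} :
    ∀ (s : Finset ι) (A : Set ℝ) (_ : MeasurableSet A) (w : ι → ℝ≥0∞)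
      (_ : ∑ i ∈ s, w i = mIco A),
    ∃ B : ι → Set ℝ, (∀ i, MeasurableSet (B i)) ∧ (∀ i ∈ s, B i ⊆ A) ∧
      ((↑s : Set ι).PairwiseDisjoint B) ∧ (∀ i ∈ s, mIco (B i) = w i) := by
  classical
  intro s
  induction s using Finset.induction_on with
  | empty =>
    intro A hA w hw
    exact ⟨fun _ => ∅, fun _ => MeasurableSet.empty, fun i hi => absurd hi (by simp),
      by simp [Set.PairwiseDisjoint, Set.Pairwise], fun i hi => absurd hi (by simp)⟩
  | insert _ _ hi ih =>
    rename_i i s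
    intro A hA w hw
    rw [Finset.sum_insert hi] at hw
    have hAfin : mIco A ≠ ⊤ := measure_ne_top _ _
    have hwile : w i ≤ mIco A := hw ▸ self_le_add_right _ _
    have hwi : w i ≠ ⊤ := (hwile.trans_lt (lt_top_iff_ne_top.2 hAfin)).ne
    set G : ℝ → ℝ := fun t => (mIco (A ∩ Set.Iic t)).toReal with hG
    have hGfin : ∀ t, mIco (A ∩ Set.Iic t) ≠ ⊤ := fun t => measure_ne_top _ _
    have key : ∀ {t t' : ℝ}, t ≤ t' → G t ≤ G t' ∧ G t' - G t ≤ t' - t := by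
      intro t t' htt
      have hsplit : mIco (A ∩ Set.Iic t') = mIco (A ∩ Set.Iic t) + mIco (A ∩ Set.Ioc t t') := by
        have hset : A ∩ Set.Iic t' = (A ∩ Set.Iic t) ∪ (A ∩ Set.Ioc t t') := by
          ext z
          simp only [Set.mem_inter_iff, Set.mem_union, Set.mem_Iic, Set.mem_Ioc]
          constructor
          · rintro ⟨hz, hz'⟩
            rcases le_or_gt z t with h | h
            · exact Or.inl ⟨hz, h⟩
            · exact Or.inr ⟨hz, h, hz'⟩
          · rintro (⟨hz, h⟩ | ⟨hz, _, h⟩)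
            · exact ⟨hz, h.trans htt⟩
            · exact ⟨hz, h⟩
        rw [hset, measure_union _ (hA.inter measurableSet_Ioc)]
        exact Set.disjoint_left.2 fun z hz hz' => absurd hz'.2.1 (not_lt.2 hz.2)
      have hb : mIco (A ∩ Set.Ioc t t') ≤ ENNReal.ofReal (t' - t) := by
        refine le_trans (mIco_le_volume _) (le_trans (measure_mono Set.inter_subset_right) ?_)
        rw [Real.volume_Ioc]
      constructor
      · rw [hG]
        simp only
        refine ENNReal.toReal_mono (hGfin t') (measure_mono ?_)
        exact Set.inter_subset_inter_right _ (Set.Iic_subset_Iic.2 htt)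
      · rw [hG]
        simp only
        rw [hsplit, ENNReal.toReal_add (hGfin t) (ne_top_of_le_ne_top ENNReal.ofReal_ne_top hb)]
        have := ENNReal.toReal_mono ENNReal.ofReal_ne_top hb
        rw [ENNReal.toReal_ofReal (by linarith)] at this
        linarith
    have hcont : Continuous G := by
      refine (LipschitzWith.of_dist_le_mul (K := 1) fun x y => ?_).continuous
      rw [Real.dist_eq, Real.dist_eq, NNReal.coe_one, one_mul]
      rcases le_total x y with h | h
      · obtain ⟨h1, h2⟩ := key h
        rw [abs_sub_comm, abs_of_nonneg (by linarith), abs_of_nonpos (by linarith)]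
        linarith
      · obtain ⟨h1, h2⟩ := key h
        rw [abs_of_nonneg (by linarith), abs_of_nonneg (by linarith)]
        linarith
    have hG0 : G 0 = 0 := by
      have : mIco (A ∩ Set.Iic 0) = 0 := by
        refine le_antisymm (le_trans ?_ (le_of_eq (Real.volume_singleton (a := 0)))) zero_le
        rw [mIco, Measure.restrict_apply (hA.inter measurableSet_Iic)]
        refine measure_mono fun z hz => ?_
        have h1 := hz.1.2
        have h2 := hz.2.1
        simp only [Set.mem_Iic] at h1
        simp only [Set.mem_singleton_iff]
        linarith
      rw [hG]; simp [this]
    have hG1 : G 1 = (mIco A).toReal := by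
      have : mIco (A ∩ Set.Iic 1) = mIco A := by
        rw [mIco, Measure.restrict_apply (hA.inter measurableSet_Iic),
          Measure.restrict_apply hA]
        congr 1
        ext z
        simp only [Set.mem_inter_iff, Set.mem_Iic, Set.mem_Ico]
        constructor
        · rintro ⟨⟨hz, _⟩, h⟩; exact ⟨hz, h⟩
        · rintro ⟨hz, h0, h1⟩; exact ⟨⟨hz, h1.le⟩, h0, h1⟩
      rw [hG]; simp [this]
    have hmem : (w i).toReal ∈ Set.Icc (G 0) (G 1) := by
      constructor
      · rw [hG0]; exact ENNReal.toReal_nonneg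
      · rw [hG1]; exact ENNReal.toReal_mono hAfin hwile
    obtain ⟨t, -, hGt⟩ := intermediate_value_Icc zero_le_one hcont.continuousOn hmem
    have hGt' : (mIco (A ∩ Set.Iic t)).toReal = (w i).toReal := hGt
    have hBt : mIco (A ∩ Set.Iic t) = w i := by
      rw [← ENNReal.ofReal_toReal (hGfin t), hGt', ENNReal.ofReal_toReal hwi]
    have hA'm : MeasurableSet (A \ Set.Iic t) := hA.diff measurableSet_Iic
    have hA'sum : ∑ j ∈ s, w j = mIco (A \ Set.Iic t) := by
      have h := measure_inter_add_diff (μ := mIco) A (measurableSet_Iic (a := t))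
      rw [hBt] at h
      have h2 : w i + ∑ j ∈ s, w j = w i + mIco (A \ Set.Iic t) := by
        rw [hw]; exact h.symm
      exact (ENNReal.add_right_inj hwi).1 h2
    obtain ⟨B', hB'm, hB'sub, hB'dis, hB'meas⟩ := ih (A \ Set.Iic t) hA'm w hA'sum
    refine ⟨Function.update B' i (A ∩ Set.Iic t), ?_, ?_, ?_, ?_⟩
    · intro j
      rcases eq_or_ne j i with rfl | hne
      · rw [Function.update_self]; exact hA.inter measurableSet_Iic
      · rw [Function.update_of_ne hne]; exact hB'm j
    · intro j hj
      rcases Finset.mem_insert.1 hj with rfl | hjs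
      · rw [Function.update_self]; exact Set.inter_subset_left
      · rw [Function.update_of_ne (ne_of_mem_of_not_mem hjs hi)]
        exact (hB'sub j hjs).trans Set.diff_subset
    · intro j hj k hk hjk
      simp only [Finset.coe_insert, Set.mem_insert_iff, Finset.mem_coe] at hj hk
      have hdisj : ∀ j' ∈ s, Disjoint (A ∩ Set.Iic t) (B' j') := by
        intro j' hj'
        refine Set.disjoint_left.2 fun z hz hz' => ?_
        exact (hB'sub j' hj' hz').2 hz.2
      simp only [Function.onFun]
      rcases hj with rfl | hj <;> rcases hk with rfl | hk
      · exact absurd rfl hjk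
      · rw [Function.update_self, Function.update_of_ne (ne_of_mem_of_not_mem hk hi)]
        exact hdisj k hk
      · rw [Function.update_self, Function.update_of_ne (ne_of_mem_of_not_mem hj hi)]
        exact (hdisj j hj).symm
      · rw [Function.update_of_ne (ne_of_mem_of_not_mem hj hi),
          Function.update_of_ne (ne_of_mem_of_not_mem hk hi)]
        exact hB'dis hj hk hjk
    · intro j hj
      rcases Finset.mem_insert.1 hj with rfl | hjs
      · rw [Function.update_self]; exact hBt
      · rw [Function.update_of_ne (ne_of_mem_of_not_mem hjs hi)]
        exact hB'meas j hjs

end Partition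
section Device

lemma eq_sum_smul_dirac {α : Type*} [MeasurableSpace α] [MeasurableSingletonClass α]
    (η : Measure α) (F : Finset α) (h : η (↑F : Set α)ᶜ = 0) :
    η = ∑ y ∈ F, η {y} • Measure.dirac y := by
  classical
  ext A hA
  have hinter : η A = η (A ∩ ↑F) := by
    have hd := measure_inter_add_diff (μ := η) A F.measurableSet
    have h0 : η (A \ ↑F) = 0 := measure_mono_null (fun z hz => hz.2) h
    rw [h0, add_zero] at hd
    exact hd.symm
  have hsplit : A ∩ ↑F = ⋃ y ∈ F.filter (· ∈ A), ({y} : Set α) := by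
    ext z
    simp only [Set.mem_inter_iff, Finset.coe_filter, Set.mem_iUnion, Finset.mem_filter,
      Set.mem_singleton_iff, Finset.mem_coe]
    constructor
    · rintro ⟨hz, hzF⟩; exact ⟨z, ⟨hzF, hz⟩, rfl⟩
    · rintro ⟨y, ⟨hyF, hyA⟩, rfl⟩; exact ⟨hyA, hyF⟩
  rw [hinter, hsplit, measure_biUnion_finset ?_ (fun y _ => measurableSet_singleton y)]
  · rw [Measure.finset_sum_apply]
    rw [Finset.sum_filter]
    refine Finset.sum_congr rfl fun y _ => ?_
    rw [Measure.smul_apply, Measure.dirac_apply' y hA, smul_eq_mul, Set.indicator_apply]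
    split_ifs
    · simp
    · simp
  · intro a ha b hb hab
    simp only [Function.onFun]
    exact Set.disjoint_singleton.2 hab

variable {X : Type*} [MetricSpace X] [MeasurableSpace X] [BorelSpace X]
variable {ι : Type*} [Fintype ι]

open Classical in
noncomputable def hfun (y : ι → X) (B : ι → Set ℝ) (x₀ : X) : ℝ → X := fun ω =>
  if h : ∃ i, ω ∈ B i then y h.choose else x₀

lemma hfun_eq {y : ι → X} {B : ι → Set ℝ} {x₀ : X}
    (hdisj : Pairwise (Function.onFun Disjoint B)) {ω : ℝ} {i : ι} (hωi : ω ∈ B i) :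
    hfun y B x₀ ω = y i := by
  have hex : ∃ j, ω ∈ B j := ⟨i, hωi⟩
  simp only [hfun]
  rw [dif_pos hex]
  have hspec : ω ∈ B hex.choose := hex.choose_spec
  rcases eq_or_ne hex.choose i with he | hne
  · rw [he]
  · exact absurd hωi (Set.disjoint_left.1 (hdisj hne) hspec)

lemma hfun_mem (y : ι → X) (B : ι → Set ℝ) (x₀ : X) (ω : ℝ) :
    hfun y B x₀ ω = x₀ ∨ ∃ i, hfun y B x₀ ω = y i := by
  simp only [hfun]
  split_ifs with h
  · exact Or.inr ⟨h.choose, rfl⟩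
  · exact Or.inl rfl

lemma hfun_measurable {y : ι → X} {B : ι → Set ℝ} {x₀ : X}
    (hB : ∀ i, MeasurableSet (B i)) (hdisj : Pairwise (Function.onFun Disjoint B)) :
    Measurable (hfun y B x₀) := by
  classical
  intro V _
  have hset : hfun y B x₀ ⁻¹' V =
      (⋃ i ∈ Finset.univ.filter (fun i => y i ∈ V), B i) ∪
      (if x₀ ∈ V then (⋃ i, B i)ᶜ else ∅) := by
    ext ω
    by_cases hex : ∃ i, ω ∈ B i
    · obtain ⟨i, hi⟩ := hex
      have hval : hfun y B x₀ ω = y i := hfun_eq hdisj hi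
      simp only [Set.mem_preimage, hval, Set.mem_union, Set.mem_iUnion, Finset.mem_filter,
        Finset.mem_univ, true_and]
      constructor
      · intro hv
        exact Or.inl ⟨i, hv, hi⟩
      · rintro (⟨j, hj, hωj⟩ | hr)
        · have : hfun y B x₀ ω = y j := hfun_eq hdisj hωj
          rw [hval] at this
          rw [this]; exact hj
        · exfalso
          split_ifs at hr with h0
          · exact (Set.mem_compl_iff _ _).1 hr (Set.mem_iUnion.2 ⟨i, hi⟩)
          · exact hr
    · have hval : hfun y B x₀ ω = x₀ := by
        simp only [hfun]; rw [dif_neg hex]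
      simp only [Set.mem_preimage, hval, Set.mem_union, Set.mem_iUnion, Finset.mem_filter,
        Finset.mem_univ, true_and]
      constructor
      · intro hv
        refine Or.inr ?_
        rw [if_pos hv]
        exact fun hc => hex (Set.mem_iUnion.1 hc)
      · rintro (⟨j, _, hωj⟩ | hr)
        · exact absurd ⟨j, hωj⟩ hex
        · split_ifs at hr with h0
          · exact h0
          · exact absurd hr (Set.notMem_empty ω)
  rw [hset]
  refine MeasurableSet.union (MeasurableSet.biUnion (Finset.countable_toSet _) fun i _ => hB i) ?_
  split_ifs
  · exact (MeasurableSet.iUnion fun i => hB i).compl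
  · exact MeasurableSet.empty

lemma hfun_law {y : ι → X} {B : ι → Set ℝ} {x₀ : X} (m : Measure ℝ) [IsFiniteMeasure m]
    (hB : ∀ i, MeasurableSet (B i)) (hdisj : Pairwise (Function.onFun Disjoint B))
    (hnull : m ((⋃ i, B i)ᶜ) = 0) :
    m.map (hfun y B x₀) = ∑ i, m (B i) • Measure.dirac (y i) := by
  classical
  ext A hA
  rw [Measure.map_apply (hfun_measurable hB hdisj) hA]
  have hd := measure_inter_add_diff (μ := m) (hfun y B x₀ ⁻¹' A)
    (MeasurableSet.iUnion fun i => hB i)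
  have h0 : m (hfun y B x₀ ⁻¹' A \ ⋃ i, B i) = 0 :=
    measure_mono_null (fun z hz => hz.2) hnull
  rw [h0, add_zero] at hd
  rw [← hd]
  have hset : hfun y B x₀ ⁻¹' A ∩ (⋃ i, B i) =
      ⋃ i ∈ Finset.univ.filter (fun i => y i ∈ A), B i := by
    ext ω
    simp only [Set.mem_inter_iff, Set.mem_preimage, Set.mem_iUnion, Finset.mem_filter,
      Finset.mem_univ, true_and]
    constructor
    · rintro ⟨hωA, i, hi⟩
      have : hfun y B x₀ ω = y i := hfun_eq hdisj hi
      rw [this] at hωA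
      exact ⟨i, hωA, hi⟩
    · rintro ⟨i, hyi, hi⟩
      have : hfun y B x₀ ω = y i := hfun_eq hdisj hi
      exact ⟨by rw [this]; exact hyi, ⟨i, hi⟩⟩
  rw [hset, measure_biUnion_finset ?_ (fun i _ => hB i)]
  · rw [Measure.finset_sum_apply, Finset.sum_filter]
    refine Finset.sum_congr rfl fun i _ => ?_
    rw [Measure.smul_apply, Measure.dirac_apply' _ hA, smul_eq_mul, Set.indicator_apply]
    split_ifs
    · simp
    · simp
  · intro a ha b hb hab
    exact hdisj hab

end Device
section Realize

variable {X : Type*} [MetricSpace X] [MeasurableSpace X] [BorelSpace X]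

lemma finset_measure_eq_sum {α : Type*} [MeasurableSpace α] [MeasurableSingletonClass α]
    (η : Measure α) (F : Finset α) : η (↑F : Set α) = ∑ y ∈ F, η {y} := by
  classical
  have h : (↑F : Set α) = ⋃ y ∈ F, ({y} : Set α) := (Set.biUnion_of_singleton (↑F : Set α)).symm
  rw [h, measure_biUnion_finset]
  · exact fun a _ b _ hab => Set.disjoint_singleton.2 hab
  · exact fun y _ => measurableSet_singleton y

lemma realize_base (ν : Measure X) [IsProbabilityMeasure ν] (F : Finset X)
    (hsupp : ν (↑F : Set X)ᶜ = 0) (x₀ : X) :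
    ∃ f : ℝ → X, Measurable f ∧ mIco.map f = ν ∧
      ∀ ω, f ω ∈ insert x₀ (↑F : Set X) := by
  classical
  have hF1 : ν (↑F : Set X) = 1 := by
    have h := measure_add_measure_compl (μ := ν) F.measurableSet
    rw [hsupp, add_zero, measure_univ] at h
    exact h
  have hw : ∑ i ∈ (Finset.univ : Finset ↥F), ν {(i : X)} = mIco (Set.univ : Set ℝ) := by
    rw [Finset.sum_coe_sort F (fun y => ν {y}), ← finset_measure_eq_sum, hF1, measure_univ]
  obtain ⟨B, hBm, hBsub, hBdis, hBmeas⟩ :=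
    exists_partition_s15 Finset.univ Set.univ MeasurableSet.univ _ hw
  have hdisj : Pairwise (Function.onFun Disjoint B) := by
    intro i j hij
    exact hBdis (Finset.mem_coe.2 (Finset.mem_univ i)) (Finset.mem_coe.2 (Finset.mem_univ j)) hij
  have hBm' : ∀ i, MeasurableSet (B i) := hBm
  have hmeasB : ∀ i : ↥F, mIco (B i) = ν {(i : X)} := fun i => hBmeas i (Finset.mem_univ i)
  have hnull : mIco ((⋃ i, B i)ᶜ) = 0 := by
    have hUmeas : MeasurableSet (⋃ i, B i) := MeasurableSet.iUnion hBm'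
    have hU : mIco (⋃ i, B i) = 1 := by
      rw [measure_iUnion (fun i j hij => hdisj hij) hBm']
      rw [tsum_fintype]
      calc ∑ i : ↥F, mIco (B i) = ∑ i : ↥F, ν {(i : X)} := Finset.sum_congr rfl fun i _ =>
            hmeasB i
        _ = 1 := by rw [Finset.sum_coe_sort F (fun y => ν {y}), ← finset_measure_eq_sum, hF1]
    rw [measure_compl hUmeas (measure_ne_top _ _), hU, measure_univ, tsub_self]
  refine ⟨hfun (fun i : ↥F => (i : X)) B x₀, hfun_measurable hBm' hdisj, ?_, ?_⟩
  · rw [hfun_law mIco hBm' hdisj hnull]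
    rw [eq_sum_smul_dirac ν F hsupp, ← Finset.sum_coe_sort F (fun y => ν {y} • Measure.dirac y)]
    exact Finset.sum_congr rfl fun i _ => by rw [hmeasB i]
  · intro ω
    rcases hfun_mem (fun i : ↥F => (i : X)) B x₀ ω with h | ⟨i, h⟩
    · rw [h]; exact Set.mem_insert _ _
    · rw [h]; exact Set.mem_insert_of_mem _ i.2

lemma realize_step {ν₁ ν₂ : Measure X} [IsProbabilityMeasure ν₁] [IsProbabilityMeasure ν₂]
    (f : ℝ → X) (hf : Measurable f) (F₁ F₂ : Finset X)
    (h1 : ν₁ (↑F₁ : Set X)ᶜ = 0) (h2 : ν₂ (↑F₂ : Set X)ᶜ = 0)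
    (hlaw : mIco.map f = ν₁) (δ : Measure (X × X)) [IsProbabilityMeasure δ]
    (hδ : IsCoupling δ ν₁ ν₂) (x₀ : X) :
    ∃ f' : ℝ → X, Measurable f' ∧ mIco.map f' = ν₂ ∧
      (∀ ω, f' ω ∈ insert x₀ (↑F₂ : Set X)) ∧
      ∫⁻ ω, edist (f ω) (f' ω) ∂mIco ≤ ∫⁻ p, edist p.1 p.2 ∂δ := by
  classical
  have hδsupp : δ (↑(F₁ ×ˢ F₂) : Set (X × X))ᶜ = 0 := coupling_supp_finset hδ h1 h2
  have hrow : ∀ y : X, ∑ z ∈ F₂, δ {(y, z)} = ν₁ {y} := by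
    intro y
    have hy : ν₁ {y} = δ (Prod.fst ⁻¹' ({y} : Set X)) := by
      rw [← hδ.1, Measure.map_apply measurable_fst (measurableSet_singleton y)]
    have hsplit : Prod.fst ⁻¹' ({y} : Set X) =
        ({y} : Set X) ×ˢ (↑F₂ : Set X) ∪ ({y} : Set X) ×ˢ (↑F₂ : Set X)ᶜ := by
      ext p
      simp only [Set.mem_preimage, Set.mem_singleton_iff, Set.mem_union, Set.mem_prod,
        Set.mem_compl_iff, Finset.mem_coe]
      tauto
    have hz : δ (({y} : Set X) ×ˢ (↑F₂ : Set X)ᶜ) = 0 := by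
      refine measure_mono_null (t := Prod.snd ⁻¹' (↑F₂ : Set X)ᶜ) (fun p hp => hp.2) ?_
      rw [← Measure.map_apply measurable_snd F₂.measurableSet.compl, hδ.2]
      exact h2
    have hm : δ (({y} : Set X) ×ˢ (↑F₂ : Set X)) = ∑ z ∈ F₂, δ {(y, z)} := by
      have hun : ({y} : Set X) ×ˢ (↑F₂ : Set X) = ⋃ z ∈ F₂, ({(y, z)} : Set (X × X)) := by
        ext p
        simp only [Set.mem_prod, Set.mem_singleton_iff, Set.mem_iUnion, Finset.mem_coe]
        constructor
        · rintro ⟨hp1, hp2⟩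
          refine ⟨p.2, hp2, ?_⟩
          rw [Prod.ext_iff]
          exact ⟨hp1, rfl⟩
        · rintro ⟨z, hz, rfl⟩
          exact ⟨rfl, hz⟩
      rw [hun, measure_biUnion_finset]
      · exact fun a _ b _ hab => Set.disjoint_singleton.2 fun h => hab ((Prod.ext_iff).1 h).2
      · exact fun z _ => measurableSet_singleton _
    have hdisj' : Disjoint (({y} : Set X) ×ˢ (↑F₂ : Set X)) (({y} : Set X) ×ˢ (↑F₂ : Set X)ᶜ) :=
      Set.disjoint_left.2 fun p hp hp' => hp'.2 hp.2
    rw [hy, hsplit,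
      measure_union hdisj' ((measurableSet_singleton y).prod F₂.measurableSet.compl), hz,
      add_zero, hm]
  have hcol : ∀ z : X, ∑ y ∈ F₁, δ {(y, z)} = ν₂ {z} := by
    intro z
    have hz' : ν₂ {z} = δ (Prod.snd ⁻¹' ({z} : Set X)) := by
      rw [← hδ.2, Measure.map_apply measurable_snd (measurableSet_singleton z)]
    have hsplit : Prod.snd ⁻¹' ({z} : Set X) =
        (↑F₁ : Set X) ×ˢ ({z} : Set X) ∪ (↑F₁ : Set X)ᶜ ×ˢ ({z} : Set X) := by
      ext p
      simp only [Set.mem_preimage, Set.mem_singleton_iff, Set.mem_union, Set.mem_prod,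
        Set.mem_compl_iff, Finset.mem_coe]
      tauto
    have hz0 : δ ((↑F₁ : Set X)ᶜ ×ˢ ({z} : Set X)) = 0 := by
      refine measure_mono_null (t := Prod.fst ⁻¹' (↑F₁ : Set X)ᶜ) (fun p hp => hp.1) ?_
      rw [← Measure.map_apply measurable_fst F₁.measurableSet.compl, hδ.1]
      exact h1
    have hm : δ ((↑F₁ : Set X) ×ˢ ({z} : Set X)) = ∑ y ∈ F₁, δ {(y, z)} := by
      have hun : (↑F₁ : Set X) ×ˢ ({z} : Set X) = ⋃ y ∈ F₁, ({(y, z)} : Set (X × X)) := by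
        ext p
        simp only [Set.mem_prod, Set.mem_singleton_iff, Set.mem_iUnion, Finset.mem_coe]
        constructor
        · rintro ⟨hp1, hp2⟩
          refine ⟨p.1, hp1, ?_⟩
          rw [Prod.ext_iff]
          exact ⟨rfl, hp2⟩
        · rintro ⟨y, hy, rfl⟩
          exact ⟨hy, rfl⟩
      rw [hun, measure_biUnion_finset]
      · exact fun a _ b _ hab => Set.disjoint_singleton.2 fun h => hab ((Prod.ext_iff).1 h).1
      · exact fun y _ => measurableSet_singleton _
    have hdisj' : Disjoint ((↑F₁ : Set X) ×ˢ ({z} : Set X)) ((↑F₁ : Set X)ᶜ ×ˢ ({z} : Set X)) :=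
      Set.disjoint_left.2 fun p hp hp' => hp'.1 hp.1
    rw [hz', hsplit,
      measure_union hdisj' (F₁.measurableSet.compl.prod (measurableSet_singleton z)), hz0,
      add_zero, hm]
  have hAmeas : ∀ y : X, MeasurableSet (f ⁻¹' ({y} : Set X)) :=
    fun y => hf (measurableSet_singleton y)
  have hAm : ∀ y : X, mIco (f ⁻¹' ({y} : Set X)) = ν₁ {y} := by
    intro y
    rw [← hlaw, Measure.map_apply hf (measurableSet_singleton y)]
  have hexB : ∀ y : ↥F₁, ∃ B : X → Set ℝ, (∀ z, MeasurableSet (B z)) ∧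
      (∀ z ∈ F₂, B z ⊆ f ⁻¹' ({(y : X)} : Set X)) ∧
      ((↑F₂ : Set X).PairwiseDisjoint B) ∧ (∀ z ∈ F₂, mIco (B z) = δ {((y : X), z)}) := by
    intro y
    refine exists_partition_s15 F₂ (f ⁻¹' ({(y : X)} : Set X)) (hAmeas _) _ ?_
    rw [hAm, hrow]
  choose Bfam hBm hBsub hBdis hBmeas using hexB
  set yfun : ↥F₁ × ↥F₂ → X := fun i => (i.2 : X) with hyfun
  set Bfun : ↥F₁ × ↥F₂ → Set ℝ := fun i => Bfam i.1 (i.2 : X) with hBfun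
  have hBfm : ∀ i, MeasurableSet (Bfun i) := fun i => hBm i.1 (i.2 : X)
  have hdisj : Pairwise (Function.onFun Disjoint Bfun) := by
    intro i j hij
    simp only [Function.onFun, hBfun]
    rcases eq_or_ne i.1 j.1 with he | hne
    · have h2' : (i.2 : X) ≠ (j.2 : X) := by
        intro hc
        exact hij (Prod.ext he (Subtype.coe_injective hc))
      rw [he]
      exact hBdis j.1 (Finset.mem_coe.2 i.2.2) (Finset.mem_coe.2 j.2.2) h2'
    · refine Set.disjoint_left.2 fun ω hω hω' => ?_
      have e1 : f ω = (i.1 : X) := hBsub i.1 (i.2 : X) i.2.2 hω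
      have e2 : f ω = (j.1 : X) := hBsub j.1 (j.2 : X) j.2.2 hω'
      exact hne (Subtype.coe_injective (e1.symm.trans e2))
  have hBval : ∀ i, mIco (Bfun i) = δ {((i.1 : X), (i.2 : X))} :=
    fun i => hBmeas i.1 (i.2 : X) i.2.2
  have hsumB : ∑ i : ↥F₁ × ↥F₂, mIco (Bfun i) = 1 := by
    calc ∑ i : ↥F₁ × ↥F₂, mIco (Bfun i)
        = ∑ y : ↥F₁, ∑ z : ↥F₂, mIco (Bfun (y, z)) := by rw [Fintype.sum_prod_type]
      _ = ∑ y : ↥F₁, ∑ z : ↥F₂, δ {((y : X), (z : X))} := by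
          refine Finset.sum_congr rfl fun y _ => Finset.sum_congr rfl fun z _ => ?_
          exact hBval (y, z)
      _ = ∑ y : ↥F₁, ν₁ {(y : X)} := by
          refine Finset.sum_congr rfl fun y _ => ?_
          rw [Finset.sum_coe_sort F₂ (fun z => δ {((y : X), z)}), hrow]
      _ = 1 := by
          rw [Finset.sum_coe_sort F₁ (fun y => ν₁ {y}), ← finset_measure_eq_sum]
          have h := measure_add_measure_compl (μ := ν₁) F₁.measurableSet
          rw [h1, add_zero, measure_univ] at h
          exact h
  have hnull : mIco ((⋃ i, Bfun i)ᶜ) = 0 := by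
    have hUmeas : MeasurableSet (⋃ i, Bfun i) := MeasurableSet.iUnion hBfm
    have hU : mIco (⋃ i, Bfun i) = 1 := by
      rw [measure_iUnion (fun i j hij => hdisj hij) hBfm, tsum_fintype, hsumB]
    rw [measure_compl hUmeas (measure_ne_top _ _), hU, measure_univ, tsub_self]
  refine ⟨hfun yfun Bfun x₀, hfun_measurable hBfm hdisj, ?_, ?_, ?_⟩
  · rw [hfun_law mIco hBfm hdisj hnull]
    rw [eq_sum_smul_dirac ν₂ F₂ h2]
    have hstep : ∑ i : ↥F₁ × ↥F₂, mIco (Bfun i) • Measure.dirac (yfun i) =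
        ∑ z : ↥F₂, (∑ y : ↥F₁, δ {((y : X), (z : X))}) • Measure.dirac ((z : X)) := by
      rw [Fintype.sum_prod_type, Finset.sum_comm]
      refine Finset.sum_congr rfl fun z _ => ?_
      rw [Finset.sum_smul]
      refine Finset.sum_congr rfl fun y _ => ?_
      rw [hBval (y, z)]
    rw [hstep, ← Finset.sum_coe_sort F₂ (fun z => ν₂ {z} • Measure.dirac z)]
    refine Finset.sum_congr rfl fun z _ => ?_
    rw [Finset.sum_coe_sort F₁ (fun y => δ {(y, (z : X))}), hcol]
  · intro ω
    rcases hfun_mem yfun Bfun x₀ ω with h | ⟨i, h⟩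
    · rw [h]; exact Set.mem_insert _ _
    · rw [h]; exact Set.mem_insert_of_mem _ i.2.2
  · -- cost
    have hcost_delta : ∫⁻ p, edist p.1 p.2 ∂δ =
        ∑ p ∈ F₁ ×ˢ F₂, δ {p} * edist p.1 p.2 := by
      conv_lhs => rw [eq_sum_smul_dirac δ (F₁ ×ˢ F₂) hδsupp]
      rw [lintegral_finset_sum_measure]
      refine Finset.sum_congr rfl fun p _ => ?_
      rw [lintegral_smul_measure, lintegral_dirac, smul_eq_mul]
    have hptwise : ∀ ω ∈ ⋃ i, Bfun i, edist (f ω) (hfun yfun Bfun x₀ ω) =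
        ∑ i : ↥F₁ × ↥F₂, (Bfun i).indicator
          (fun _ => edist ((i.1 : X)) ((i.2 : X))) ω := by
      intro ω hω
      obtain ⟨i, hi⟩ := Set.mem_iUnion.1 hω
      have hval : hfun yfun Bfun x₀ ω = (i.2 : X) := hfun_eq hdisj hi
      have hfω : f ω = (i.1 : X) := hBsub i.1 (i.2 : X) i.2.2 hi
      rw [hval, hfω]
      rw [Finset.sum_eq_single i]
      · rw [Set.indicator_of_mem hi]
      · intro j _ hji
        rw [Set.indicator_of_notMem]
        exact fun hωj => (Set.disjoint_left.1 (hdisj hji) hωj) hi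
      · intro hni
        exact absurd (Finset.mem_univ i) hni
    have hae : (fun ω => edist (f ω) (hfun yfun Bfun x₀ ω)) =ᵐ[mIco]
        (fun ω => ∑ i : ↥F₁ × ↥F₂, (Bfun i).indicator
          (fun _ => edist ((i.1 : X)) ((i.2 : X))) ω) := by
      refine measure_mono_null (fun ω hω => ?_) hnull
      exact fun hmem => hω (hptwise ω hmem)
    refine le_of_eq ?_
    calc ∫⁻ ω, edist (f ω) (hfun yfun Bfun x₀ ω) ∂mIco
        = ∫⁻ ω, ∑ i : ↥F₁ × ↥F₂, (Bfun i).indicator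
            (fun _ => edist ((i.1 : X)) ((i.2 : X))) ω ∂mIco := lintegral_congr_ae hae
      _ = ∑ i : ↥F₁ × ↥F₂, ∫⁻ ω, (Bfun i).indicator
            (fun _ => edist ((i.1 : X)) ((i.2 : X))) ω ∂mIco :=
          lintegral_finset_sum Finset.univ fun i _ => measurable_const.indicator (hBfm i)
      _ = ∑ i : ↥F₁ × ↥F₂, δ {((i.1 : X), (i.2 : X))} * edist ((i.1 : X)) ((i.2 : X)) := by
          refine Finset.sum_congr rfl fun i _ => ?_
          rw [lintegral_indicator (hBfm i), setLIntegral_const, hBval i, mul_comm]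
      _ = ∑ p ∈ F₁ ×ˢ F₂, δ {p} * edist p.1 p.2 := by
          rw [Fintype.sum_prod_type]
          rw [Finset.sum_product]
          rw [← Finset.sum_coe_sort F₁
            (fun y => ∑ z ∈ F₂, δ {(y, z)} * edist y z)]
          refine Finset.sum_congr rfl fun y _ => ?_
          rw [← Finset.sum_coe_sort F₂ (fun z => δ {((y : X), z)} * edist (y : X) z)]
      _ = ∫⁻ p, edist p.1 p.2 ∂δ := hcost_delta.symm

end Realize
section Ulam

variable {X : Type*} [MetricSpace X] [MeasurableSpace X] [BorelSpace X]

lemma tight_of_conc [CompleteSpace X] (ν : Measure X) [IsProbabilityMeasure ν] {T : Set X}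
    (hT : T.Countable) (hTne : T.Nonempty) (hconc : ν (closure T)ᶜ = 0) : IsTightM ν := by
  classical
  intro ε hε
  obtain ⟨e, he⟩ := Set.Countable.exists_eq_range hT hTne
  have hclos : ν (closure T) = 1 := by
    have h := measure_add_measure_compl (μ := ν) (s := closure T)
      isClosed_closure.measurableSet
    rw [hconc, add_zero, measure_univ] at h
    exact h
  set U : ℕ → ℕ → Set X := fun j N => ⋃ i ∈ Finset.range N, closedBall (e i) (1 / (j + 1))
    with hU
  have hUmeas : ∀ j N, MeasurableSet (U j N) := fun j N =>
    (Finset.range N).measurableSet_biUnion fun i _ => measurableSet_closedBall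
  have hUclosed : ∀ j N, IsClosed (U j N) := fun j N =>
    (Finset.range N).finite_toSet.isClosed_biUnion fun i _ => Metric.isClosed_closedBall
  have hUmono : ∀ j, Monotone (U j) := by
    intro j N M hNM
    refine Set.biUnion_subset_biUnion_left ?_
    intro i hi
    exact Finset.mem_coe.2 (Finset.mem_range.2
      (lt_of_lt_of_le (Finset.mem_range.1 (Finset.mem_coe.1 hi)) hNM))
  have hUall : ∀ j, closure T ⊆ ⋃ N, U j N := by
    intro j x hx
    rcases Metric.mem_closure_iff.1 hx (1 / (j + 1)) (by positivity) with ⟨t, ht, hdist⟩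
    rw [he] at ht
    obtain ⟨i, rfl⟩ := ht
    refine Set.mem_iUnion.2 ⟨i + 1, ?_⟩
    refine Set.mem_biUnion (Finset.mem_range.2 (Nat.lt_succ_self i)) ?_
    exact mem_closedBall.2 hdist.le
  have hchoice : ∀ j : ℕ, ∃ N, ν (U j N)ᶜ ≤ ε * 2⁻¹ ^ (j + 1) := by
    intro j
    by_cases h1 : 1 ≤ ε * 2⁻¹ ^ (j + 1)
    · exact ⟨0, le_trans prob_le_one h1⟩
    · push_neg at h1
      have hlim : Filter.Tendsto (fun N => ν (U j N)) Filter.atTop (nhds (ν (⋃ N, U j N))) :=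
        tendsto_measure_iUnion_atTop (hUmono j)
      have hone : ν (⋃ N, U j N) = 1 :=
        le_antisymm prob_le_one (le_trans (le_of_eq hclos.symm) (measure_mono (hUall j)))
      rw [hone] at hlim
      have hev : ∀ᶠ N in Filter.atTop, 1 - ε * 2⁻¹ ^ (j + 1) < ν (U j N) :=
        hlim.eventually (eventually_gt_nhds (ENNReal.sub_lt_self ENNReal.one_ne_top one_ne_zero
          (mul_ne_zero hε.ne' (pow_ne_zero _ (ENNReal.inv_ne_zero.2 (by norm_num))))))
      obtain ⟨N, hN⟩ := hev.exists
      refine ⟨N, ?_⟩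
      rw [prob_compl_eq_one_sub (hUmeas j N)]
      rw [tsub_le_iff_right]
      calc (1 : ℝ≥0∞) = ε * 2⁻¹ ^ (j + 1) + (1 - ε * 2⁻¹ ^ (j + 1)) :=
            (add_tsub_cancel_of_le h1.le).symm
        _ ≤ ε * 2⁻¹ ^ (j + 1) + ν (U j N) := add_le_add_right hN.le _
  choose N hN using hchoice
  set K : Set X := ⋂ j, U j (N j) with hK
  have hKclosed : IsClosed K := isClosed_iInter fun j => hUclosed j (N j)
  have hKtb : TotallyBounded K := by
    rw [Metric.totallyBounded_iff]
    intro r hr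
    obtain ⟨j, hj⟩ := exists_nat_one_div_lt hr
    refine ⟨↑((Finset.range (N j)).image e), Finset.finite_toSet _, ?_⟩
    intro x hx
    have hxU : x ∈ U j (N j) := Set.mem_iInter.1 hx j
    obtain ⟨i, hi, hxi⟩ := Set.mem_iUnion₂.1 hxU
    exact Set.mem_biUnion (Finset.mem_coe.2 (Finset.mem_image_of_mem e hi))
      (mem_ball.2 (lt_of_le_of_lt (mem_closedBall.1 hxi) hj))
  refine ⟨K, hKtb.isCompact_of_isClosed hKclosed, ?_⟩
  have hKc : Kᶜ = ⋃ j, (U j (N j))ᶜ := by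
    rw [hK, Set.compl_iInter]
  rw [hKc]
  refine le_trans (measure_iUnion_le _) ?_
  calc ∑' j, ν (U j (N j))ᶜ ≤ ∑' j, ε * 2⁻¹ ^ (j + 1) := ENNReal.tsum_le_tsum hN
    _ = ε * ∑' j, 2⁻¹ ^ (j + 1) := ENNReal.tsum_mul_left
    _ = ε := by
        have hgeo : ∑' j : ℕ, (2⁻¹ : ℝ≥0∞) ^ (j + 1) = 1 := by
          have h1 : ∑' j : ℕ, (2⁻¹ : ℝ≥0∞) ^ (j + 1) = (∑' j : ℕ, (2⁻¹ : ℝ≥0∞) ^ j) * 2⁻¹ := by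
            rw [← ENNReal.tsum_mul_right]
            exact tsum_congr fun j => (pow_succ 2⁻¹ j)
          rw [h1, ENNReal.tsum_geometric, ENNReal.one_sub_inv_two]
          exact ENNReal.inv_mul_cancel (ENNReal.inv_ne_zero.2 (by norm_num))
            (ENNReal.inv_ne_top.2 (by norm_num))
        rw [hgeo, mul_one]

end Ulam

section Chain

variable {X : Type*} [MetricSpace X] [MeasurableSpace X] [BorelSpace X]

lemma chain_exists (ν : ℕ → Measure X) (hprob : ∀ k, IsProbabilityMeasure (ν k))
    (F : ℕ → Finset X) (hsupp : ∀ k, ν k (↑(F k) : Set X)ᶜ = 0)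
    (δ : ℕ → Measure (X × X)) (hδp : ∀ k, IsProbabilityMeasure (δ k))
    (hδc : ∀ k, IsCoupling (δ k) (ν k) (ν (k + 1))) (x₀ : X) :
    ∃ f : ℕ → ℝ → X, (∀ k, Measurable (f k)) ∧ (∀ k, mIco.map (f k) = ν k) ∧
      (∀ k ω, f k ω ∈ insert x₀ (↑(F k) : Set X)) ∧
      (∀ k, ∫⁻ ω, edist (f k ω) (f (k + 1) ω) ∂mIco ≤ ∫⁻ p, edist p.1 p.2 ∂(δ k)) := by
  classical
  set P : ℕ → (ℝ → X) → Prop := fun k f =>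
    Measurable f ∧ mIco.map f = ν k ∧ ∀ ω, f ω ∈ insert x₀ (↑(F k) : Set X) with hP
  have hbase : ∃ f, P 0 f := by
    haveI := hprob 0
    obtain ⟨f, h1, h2, h3⟩ := realize_base (ν 0) (F 0) (hsupp 0) x₀
    exact ⟨f, h1, h2, h3⟩
  have hex : ∀ k (fp : {f : ℝ → X // P k f}), ∃ g : {f : ℝ → X // P (k + 1) f},
      ∫⁻ ω, edist (fp.1 ω) (g.1 ω) ∂mIco ≤ ∫⁻ p, edist p.1 p.2 ∂(δ k) := by
    intro k fp
    haveI := hprob k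
    haveI := hprob (k + 1)
    haveI := hδp k
    obtain ⟨f', h1, h2, h3, h4⟩ := realize_step fp.1 fp.2.1 (F k) (F (k + 1)) (hsupp k)
      (hsupp (k + 1)) fp.2.2.1 (δ k) (hδc k) x₀
    exact ⟨⟨f', h1, h2, h3⟩, h4⟩
  let base0 : {f : ℝ → X // P 0 f} := ⟨hbase.choose, hbase.choose_spec⟩
  let step : ∀ k, {f : ℝ → X // P k f} → {f : ℝ → X // P (k + 1) f} :=
    fun k fp => (hex k fp).choose
  have hstepc : ∀ k fp, ∫⁻ ω, edist (fp.1 ω) ((step k fp).1 ω) ∂mIco ≤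
      ∫⁻ p, edist p.1 p.2 ∂(δ k) := fun k fp => (hex k fp).choose_spec
  let Ffun : ∀ k, {f : ℝ → X // P k f} := fun k => Nat.rec base0 step k
  refine ⟨fun k => (Ffun k).1, fun k => (Ffun k).2.1, fun k => (Ffun k).2.2.1,
    fun k => (Ffun k).2.2.2, fun k => ?_⟩
  exact hstepc k (Ffun k)

end Chain
section Helpers

variable {X : Type*} [MetricSpace X] [MeasurableSpace X] [BorelSpace X]

lemma map_round_supp (μ : Measure X) {T : X → X} (hTm : Measurable T)
    (hr : (Set.range T).Finite) : (μ.map T) (↑hr.toFinset : Set X)ᶜ = 0 := by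
  rw [Measure.map_apply hTm hr.toFinset.measurableSet.compl]
  have h : T ⁻¹' (↑hr.toFinset : Set X)ᶜ = ∅ := by
    ext x
    simp only [Set.mem_preimage, Set.mem_compl_iff, Set.mem_empty_iff_false, iff_false,
      not_not, Finset.mem_coe, Set.Finite.mem_toFinset]
    exact Set.mem_range_self x
  rw [h, measure_empty]

lemma round_coupling (μ : Measure X) {T : X → X} (hTm : Measurable T) :
    IsCoupling (μ.map (fun x => (x, T x))) μ (μ.map T) ∧
    ∫⁻ p, edist p.1 p.2 ∂(μ.map (fun x => (x, T x))) ≤ ∫⁻ x, edist x (T x) ∂μ := by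
  have hpm : Measurable fun x => (x, T x) := measurable_id.prodMk hTm
  refine ⟨⟨?_, ?_⟩, ?_⟩
  · rw [Measure.map_map measurable_fst hpm]
    have : (Prod.fst ∘ fun x => (x, T x)) = id := rfl
    rw [this, Measure.map_id]
  · rw [Measure.map_map measurable_snd hpm]
    rfl
  · exact lintegral_map_le _ _

lemma map_prodmap_coupling {γ : Measure (X × X)} {μ₁ μ₂ : Measure X}
    (hγ : IsCoupling γ μ₁ μ₂) {T₁ T₂ : X → X} (h1 : Measurable T₁) (h2 : Measurable T₂) :
    IsCoupling (γ.map (Prod.map T₁ T₂)) (μ₁.map T₁) (μ₂.map T₂) := by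
  constructor
  · rw [Measure.map_map measurable_fst (h1.prodMap h2)]
    have heq : (Prod.fst ∘ Prod.map T₁ T₂) = T₁ ∘ Prod.fst := rfl
    rw [heq, ← Measure.map_map h1 measurable_fst, hγ.1]
  · rw [Measure.map_map measurable_snd (h1.prodMap h2)]
    have heq : (Prod.snd ∘ Prod.map T₁ T₂) = T₂ ∘ Prod.snd := rfl
    rw [heq, ← Measure.map_map h2 measurable_snd, hγ.2]

lemma cost_map_prodmap {γ : Measure (X × X)} {μ₁ μ₂ : Measure X}
    (hγ : IsCoupling γ μ₁ μ₂) {T₁ T₂ : X → X} (h1 : Measurable T₁) (h2 : Measurable T₂)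
    (hr1 : (Set.range T₁).Finite) (hr2 : (Set.range T₂).Finite) :
    ∫⁻ p, edist p.1 p.2 ∂(γ.map (Prod.map T₁ T₂)) ≤
      (∫⁻ x, edist x (T₁ x) ∂μ₁ + ∫⁻ p, edist p.1 p.2 ∂γ) + ∫⁻ x, edist x (T₂ x) ∂μ₂ := by
  have hma : Measurable fun p : X × X => edist (T₁ p.1) p.1 :=
    measurable_edist_pair (h1.comp measurable_fst)
      (hr1.subset (by rintro y ⟨p, rfl⟩; exact Set.mem_range_self p.1)) measurable_fst
  have hmc : Measurable fun p : X × X => edist p.2 (T₂ p.2) := by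
    have h' : Measurable fun p : X × X => edist (T₂ p.2) p.2 :=
      measurable_edist_pair (f := fun p : X × X => T₂ p.2) (g := Prod.snd)
        (h2.comp measurable_snd)
        (hr2.subset (by rintro y ⟨p, rfl⟩; exact Set.mem_range_self p.2)) measurable_snd
    have heq : (fun p : X × X => edist p.2 (T₂ p.2)) = fun p => edist (T₂ p.2) p.2 := by
      funext p; rw [edist_comm]
    rw [heq]
    exact h'
  calc ∫⁻ p, edist p.1 p.2 ∂(γ.map (Prod.map T₁ T₂))
      ≤ ∫⁻ p, edist (T₁ p.1) (T₂ p.2) ∂γ := lintegral_map_le _ _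
    _ ≤ ∫⁻ p, (edist (T₁ p.1) p.1 + (edist p.2 (T₂ p.2) + edist p.1 p.2)) ∂γ := by
        refine lintegral_mono fun p => ?_
        calc edist (T₁ p.1) (T₂ p.2) ≤ edist (T₁ p.1) p.1 + edist p.1 (T₂ p.2) :=
              edist_triangle _ _ _
          _ ≤ edist (T₁ p.1) p.1 + (edist p.1 p.2 + edist p.2 (T₂ p.2)) := by
              exact add_le_add_right (edist_triangle _ _ _) _
          _ = edist (T₁ p.1) p.1 + (edist p.2 (T₂ p.2) + edist p.1 p.2) := by
              rw [add_comm (edist p.1 p.2)]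
    _ = ∫⁻ p, edist (T₁ p.1) p.1 ∂γ +
        (∫⁻ p, edist p.2 (T₂ p.2) ∂γ + ∫⁻ p, edist p.1 p.2 ∂γ) := by
        rw [lintegral_add_left hma, lintegral_add_left hmc]
    _ ≤ (∫⁻ x, edist x (T₁ x) ∂μ₁ + ∫⁻ p, edist p.1 p.2 ∂γ) + ∫⁻ x, edist x (T₂ x) ∂μ₂ := by
        have hmx : Measurable fun x : X => edist x (T₁ x) := by
          have h' : Measurable fun x : X => edist (T₁ x) x :=
            measurable_edist_pair h1 hr1 measurable_id
          have heq : (fun x : X => edist x (T₁ x)) = fun x => edist (T₁ x) x :=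
            funext fun x => edist_comm _ _
          rw [heq]; exact h'
        have hmy : Measurable fun x : X => edist x (T₂ x) := by
          have h' : Measurable fun x : X => edist (T₂ x) x :=
            measurable_edist_pair h2 hr2 measurable_id
          have heq : (fun x : X => edist x (T₂ x)) = fun x => edist (T₂ x) x :=
            funext fun x => edist_comm _ _
          rw [heq]; exact h'
        have hA : ∫⁻ p, edist (T₁ p.1) p.1 ∂γ = ∫⁻ x, edist x (T₁ x) ∂μ₁ := by
          rw [← hγ.1, lintegral_map (f := fun x => edist x (T₁ x)) hmx measurable_fst]
          exact lintegral_congr fun p => edist_comm _ _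
        have hC : ∫⁻ p, edist p.2 (T₂ p.2) ∂γ = ∫⁻ x, edist x (T₂ x) ∂μ₂ := by
          rw [← hγ.2, lintegral_map (f := fun x => edist x (T₂ x)) hmy measurable_snd]
        rw [hA, hC]
        rw [add_assoc, add_comm (∫⁻ x, edist x (T₂ x) ∂μ₂), ← add_assoc]

end Helpers
section Interface

variable {X : Type*} [MetricSpace X] [MeasurableSpace X] [BorelSpace X]

lemma ofReal_half_pow (k : ℕ) : ENNReal.ofReal ((1/2 : ℝ) ^ k) = (2⁻¹ : ℝ≥0∞) ^ k := by
  rw [ENNReal.ofReal_pow (by norm_num)]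
  congr 1
  rw [one_div, ENNReal.ofReal_inv_of_pos (by norm_num)]
  norm_num

lemma kant_le_cost {μ η : Measure X} [IsProbabilityMeasure μ] [IsProbabilityMeasure η]
    (hμt : IsTightM μ) (hηt : IsTightM η) (hμc : Conc μ) (hηc : Conc η)
    {l : Measure (X × X)} (hl : IsCoupling l μ η) :
    kant μ η ≤ (∫⁻ p, edist p.1 p.2 ∂l).toReal := by
  haveI : IsProbabilityMeasure l := prob_of_coupling hl
  have hconc : Conc l := conc_coupling hl hμc hηc
  have hconv := cost_conv hconc
  rw [← hconv]
  exact kant_le inferInstance (coupling_tight hl hμt hηt) hl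

lemma exists_coupling_lintegral_lt {μ η : Measure X} [IsProbabilityMeasure μ]
    [IsProbabilityMeasure η] (hμt : IsTightM μ) (hηt : IsTightM η) (hμc : Conc μ)
    (hηc : Conc η) {D : ℝ} (hD : ∀ x y : X, dist x y ≤ D) {ε : ℝ} (h : kant μ η < ε) :
    ∃ l : Measure (X × X), IsProbabilityMeasure l ∧ IsCoupling l μ η ∧
      ∫⁻ p, edist p.1 p.2 ∂l ≤ ENNReal.ofReal ε := by
  obtain ⟨l, hp, _, hc, hint⟩ := exists_coupling_lt hμt hηt h
  haveI := hp
  have hconc : Conc l := conc_coupling hc hμc hηc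
  have hconv := cost_conv hconc
  have hnt : ∫⁻ p, edist p.1 p.2 ∂l ≠ ⊤ := cost_ne_top hD
  refine ⟨l, hp, hc, ?_⟩
  rw [← ENNReal.ofReal_toReal hnt, ← hconv]
  exact ENNReal.ofReal_le_ofReal hint.le

end Interface
/-- If `d` is a complete bounded metric on `X`, then the Kantorovich metric on the tight
Borel probability measures on `X` is complete. -/
theorem stmt15 {X : Type*} [MetricSpace X] [CompleteSpace X] [MeasurableSpace X] [BorelSpace X]
    (hbdd : Bornology.IsBounded (Set.univ : Set X))
    (μ : ℕ → Measure X) (hprob : ∀ n, IsProbabilityMeasure (μ n))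
    (htight : ∀ n, IsTightM (μ n))
    (hcauchy : ∀ ε : ℝ, 0 < ε → ∃ N : ℕ, ∀ m ≥ N, ∀ n ≥ N, kant (μ m) (μ n) < ε) :
    ∃ ν : Measure X, IsProbabilityMeasure ν ∧ IsTightM ν ∧
      Filter.Tendsto (fun n => kant (μ n) ν) Filter.atTop (nhds 0) := by
  classical
  -- X is nonempty
  have hXne : Nonempty X := by
    by_contra h
    rw [not_nonempty_iff] at h
    haveI := hprob 0
    have h1 : (μ 0) Set.univ = 1 := measure_univ
    have h2 : (Set.univ : Set X) = ∅ := Set.univ_eq_empty_iff.2 h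
    rw [h2, measure_empty] at h1
    exact zero_ne_one h1
  obtain ⟨x₀⟩ := hXne
  -- diameter bound
  obtain ⟨D, hD⟩ : ∃ D : ℝ, ∀ x y : X, dist x y ≤ D := by
    rcases Metric.isBounded_iff.1 hbdd with ⟨C, hC⟩
    exact ⟨C, fun x y => hC (Set.mem_univ x) (Set.mem_univ y)⟩
  have hconcμ : ∀ n, Conc (μ n) := fun n => conc_of_tight (htight n)
  -- subsequence
  have hNex : ∀ k : ℕ, ∃ N : ℕ, ∀ m ≥ N, ∀ n ≥ N, kant (μ m) (μ n) < (1/2 : ℝ) ^ k :=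
    fun k => hcauchy _ (by positivity)
  choose Nf hNf using hNex
  set nk : ℕ → ℕ := fun k => (Finset.range (k + 1)).sup Nf with hnk
  have hnk_ge : ∀ k, Nf k ≤ nk k := fun k =>
    Finset.le_sup (Finset.mem_range.2 (Nat.lt_succ_self k))
  have hnk_mono : Monotone nk := fun a b hab =>
    Finset.sup_mono (Finset.range_subset_range.2 (by omega))
  have hkant_consec : ∀ k, kant (μ (nk k)) (μ (nk (k + 1))) < (1/2 : ℝ) ^ k := fun k =>
    hNf k (nk k) (hnk_ge k) (nk (k + 1)) (le_trans (hnk_ge k) (hnk_mono (Nat.le_succ k)))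
  -- rounding maps
  have hTex : ∀ k, ∃ T : X → X, Measurable T ∧ (Set.range T).Finite ∧
      ∫⁻ x, edist x (T x) ∂(μ (nk k)) ≤ ENNReal.ofReal ((1/2 : ℝ) ^ k) := by
    intro k
    haveI := hprob (nk k)
    exact exists_round (μ (nk k)) (htight (nk k)) (by positivity) hD x₀
  choose Tk hTkm hTkr hTkcost using hTex
  set νd : ℕ → Measure X := fun k => (μ (nk k)).map (Tk k) with hνd
  have hνdprob : ∀ k, IsProbabilityMeasure (νd k) := by
    intro k
    haveI := hprob (nk k)
    exact Measure.isProbabilityMeasure_map (hTkm k).aemeasurable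
  set Fk : ℕ → Finset X := fun k => (hTkr k).toFinset with hFk
  have hνdsupp : ∀ k, νd k (↑(Fk k) : Set X)ᶜ = 0 := fun k =>
    map_round_supp (μ (nk k)) (hTkm k) (hTkr k)
  -- couplings between consecutive discrete measures
  have hγex : ∀ k, ∃ γ : Measure (X × X), IsProbabilityMeasure γ ∧
      IsCoupling γ (μ (nk k)) (μ (nk (k + 1))) ∧
      ∫⁻ p, edist p.1 p.2 ∂γ ≤ ENNReal.ofReal ((1/2 : ℝ) ^ k) := by
    intro k
    haveI := hprob (nk k)
    haveI := hprob (nk (k + 1))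
    exact exists_coupling_lintegral_lt (htight _) (htight _) (hconcμ _) (hconcμ _) hD
      (hkant_consec k)
  choose γ hγp hγc hγcost using hγex
  set δk : ℕ → Measure (X × X) := fun k => (γ k).map (Prod.map (Tk k) (Tk (k + 1))) with hδk
  have hδkprob : ∀ k, IsProbabilityMeasure (δk k) := by
    intro k
    haveI := hγp k
    exact Measure.isProbabilityMeasure_map ((hTkm k).prodMap (hTkm (k + 1))).aemeasurable
  have hδkc : ∀ k, IsCoupling (δk k) (νd k) (νd (k + 1)) := fun k =>
    map_prodmap_coupling (hγc k) (hTkm k) (hTkm (k + 1))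
  have hδkcost : ∀ k, ∫⁻ p, edist p.1 p.2 ∂(δk k) ≤ 3 * (2⁻¹ : ℝ≥0∞) ^ k := by
    intro k
    refine le_trans (cost_map_prodmap (hγc k) (hTkm k) (hTkm (k + 1)) (hTkr k) (hTkr (k + 1)))
      ?_
    have hb : ((2⁻¹ : ℝ≥0∞) ^ k + (2⁻¹ : ℝ≥0∞) ^ k) + (2⁻¹ : ℝ≥0∞) ^ (k + 1) ≤
        3 * (2⁻¹ : ℝ≥0∞) ^ k := by
      have h1 : (2⁻¹ : ℝ≥0∞) ^ (k + 1) ≤ (2⁻¹ : ℝ≥0∞) ^ k := by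
        rw [pow_succ]
        exact le_trans (mul_le_mul_right (by norm_num : (2⁻¹ : ℝ≥0∞) ≤ 1) _) (by rw [mul_one])
      calc ((2⁻¹ : ℝ≥0∞) ^ k + (2⁻¹ : ℝ≥0∞) ^ k) + (2⁻¹ : ℝ≥0∞) ^ (k + 1) ≤
            ((2⁻¹ : ℝ≥0∞) ^ k + (2⁻¹ : ℝ≥0∞) ^ k) + (2⁻¹ : ℝ≥0∞) ^ k := add_le_add_right h1 _
        _ = 3 * (2⁻¹ : ℝ≥0∞) ^ k := by ring
    refine le_trans ?_ hb
    refine add_le_add (add_le_add ?_ ?_) ?_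
    · rw [← ofReal_half_pow]; exact hTkcost k
    · rw [← ofReal_half_pow]; exact hγcost k
    · rw [← ofReal_half_pow]; exact hTkcost (k + 1)
  -- chain of representations
  obtain ⟨f, hfm, hflaw, hfrng, hfcost⟩ := chain_exists νd hνdprob Fk hνdsupp δk hδkprob hδkc x₀
  have hfrfin : ∀ k, (Set.range (f k)).Finite := by
    intro k
    refine (((Fk k).finite_toSet).insert x₀).subset ?_
    rintro y ⟨ω, rfl⟩
    exact hfrng k ω
  have hgmeas : ∀ k, Measurable fun ω => edist (f k ω) (f (k + 1) ω) := fun k =>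
    measurable_edist_pair (hfm k) (hfrfin k) (hfm (k + 1))
  set g : ℕ → ℝ≥0∞ := fun k => ∫⁻ ω, edist (f k ω) (f (k + 1) ω) ∂mIco with hg
  have hgb : ∀ k, g k ≤ 3 * (2⁻¹ : ℝ≥0∞) ^ k := fun k =>
    le_trans (hfcost k) (hδkcost k)
  have hsum : ∑' k, g k ≠ ⊤ := by
    refine ne_top_of_le_ne_top ?_ (ENNReal.tsum_le_tsum hgb)
    rw [ENNReal.tsum_mul_left, ENNReal.tsum_geometric, ENNReal.one_sub_inv_two]
    exact ENNReal.mul_ne_top (by norm_num)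
      (ENNReal.inv_ne_top.2 (ENNReal.inv_ne_zero.2 (by norm_num)))
  -- a.e. convergence
  have htsum_ae : ∀ᵐ ω ∂mIco, ∑' k, edist (f k ω) (f (k + 1) ω) < ⊤ := by
    refine ae_lt_top (Measurable.ennreal_tsum hgmeas) ?_
    rw [lintegral_tsum fun k => (hgmeas k).aemeasurable]
    exact hsum
  have hcauchy_ae : ∀ᵐ ω ∂mIco, ∃ L, Filter.Tendsto (fun k => f k ω) Filter.atTop (nhds L) := by
    filter_upwards [htsum_ae] with ω hω
    exact cauchySeq_tendsto_of_complete
      (cauchySeq_of_edist_le_of_tsum_ne_top _ (fun k => le_rfl) hω.ne)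
  obtain ⟨flim, hflimm, hflimae⟩ := measurable_limit_of_tendsto_metrizable_ae
    (fun k => (hfm k).aemeasurable) hcauchy_ae
  set ν : Measure X := mIco.map flim with hν
  haveI hνprob : IsProbabilityMeasure ν := Measure.isProbabilityMeasure_map hflimm.aemeasurable
  -- concentration set for ν
  set TT : Set X := {x₀} ∪ ⋃ k, (↑(Fk k) : Set X) with hTT
  have hTTc : TT.Countable :=
    (Set.countable_singleton x₀).union (Set.countable_iUnion fun k => (Fk k).countable_toSet)
  have hmemTT : ∀ k ω, f k ω ∈ TT := by
    intro k ω
    rcases Set.mem_insert_iff.1 (hfrng k ω) with h | h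
    · exact Or.inl h
    · exact Or.inr (Set.mem_iUnion.2 ⟨k, h⟩)
  have hflim_mem : ∀ᵐ ω ∂mIco, flim ω ∈ closure TT := by
    filter_upwards [hflimae] with ω hω
    exact isClosed_closure.mem_of_tendsto hω
      (Filter.Eventually.of_forall fun k => subset_closure (hmemTT k ω))
  have hνnull : ν (closure TT)ᶜ = 0 := by
    rw [hν, Measure.map_apply hflimm isClosed_closure.measurableSet.compl]
    exact MeasureTheory.ae_iff.1 hflim_mem
  have hνConc : Conc ν := ⟨TT, hTTc, hνnull⟩
  have hνtight : IsTightM ν := tight_of_conc ν hTTc ⟨x₀, Or.inl rfl⟩ hνnull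
  -- couplings to the limit
  set β : ℕ → Measure (X × X) := fun j => mIco.map (fun ω => (f j ω, flim ω)) with hβ
  have hβmeas : ∀ j, Measurable fun ω => (f j ω, flim ω) := fun j => (hfm j).prodMk hflimm
  have hβc : ∀ j, IsCoupling (β j) (νd j) ν := by
    intro j
    constructor
    · rw [hβ]
      simp only
      rw [Measure.map_map measurable_fst (hβmeas j)]
      have heq : (Prod.fst ∘ fun ω => (f j ω, flim ω)) = f j := rfl
      rw [heq, hflaw j]
    · rw [hβ, hν]
      simp only
      rw [Measure.map_map measurable_snd (hβmeas j)]
      rfl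
  have hβprob : ∀ j, IsProbabilityMeasure (β j) := fun j =>
    Measure.isProbabilityMeasure_map (hβmeas j).aemeasurable
  have hβcost : ∀ j, ∫⁻ p, edist p.1 p.2 ∂(β j) ≤ ∑' k, g (k + j) := by
    intro j
    refine le_trans (lintegral_map_le _ _) ?_
    have hptw : ∀ᵐ ω ∂mIco, edist (f j ω) (flim ω) ≤
        ∑' m, edist (f (j + m) ω) (f (j + m + 1) ω) := by
      filter_upwards [hflimae] with ω hω
      exact edist_le_tsum_of_edist_le_of_tendsto
        (fun k => edist (f k ω) (f (k + 1) ω)) (fun k => le_rfl) hω j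
    refine le_trans (lintegral_mono_ae hptw) ?_
    rw [lintegral_tsum fun m => (hgmeas (j + m)).aemeasurable]
    exact le_of_eq (tsum_congr fun m => by rw [add_comm m j])
  have htail : Filter.Tendsto (fun j => ∑' k, g (k + j)) Filter.atTop (nhds 0) :=
    ENNReal.tendsto_sum_nat_add g hsum
  -- main estimate
  refine ⟨ν, hνprob, hνtight, ?_⟩
  rw [Metric.tendsto_atTop]
  intro ε hε
  have hε8 : 0 < ε / 8 := by linarith
  obtain ⟨j₁, hj₁⟩ := exists_pow_lt_of_lt_one hε8 (by norm_num : (1/2 : ℝ) < 1)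
  have hev := htail.eventually_lt_const (ENNReal.ofReal_pos.2 hε8)
  obtain ⟨j₂, hj₂⟩ := Filter.eventually_atTop.1 hev
  set j : ℕ := max j₁ j₂ with hj
  have hjpow : (1/2 : ℝ) ^ j < ε / 8 :=
    lt_of_le_of_lt (pow_le_pow_of_le_one (by norm_num) (by norm_num) (le_max_left j₁ j₂)) hj₁
  have hjtail : ∑' k, g (k + j) < ENNReal.ofReal (ε / 8) := hj₂ j (le_max_right j₁ j₂)
  refine ⟨nk j, fun n hn => ?_⟩
  haveI := hprob n
  haveI := hprob (nk j)
  -- rounding of μ n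
  obtain ⟨T', hT'm, hT'r, hT'cost⟩ := exists_round (μ n) (htight n) hε8 hD x₀
  set ν' : Measure X := (μ n).map T' with hν'
  haveI : IsProbabilityMeasure ν' := Measure.isProbabilityMeasure_map hT'm.aemeasurable
  set F' : Finset X := hT'r.toFinset with hF'
  have hν'supp : ν' (↑F' : Set X)ᶜ = 0 := map_round_supp (μ n) hT'm hT'r
  obtain ⟨hαc, hαcost⟩ := round_coupling (μ n) hT'm
  -- coupling from Cauchy property
  have hkantlt : kant (μ n) (μ (nk j)) < (1/2 : ℝ) ^ j :=
    hNf j n (le_trans (hnk_ge j) hn) (nk j) (hnk_ge j)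
  obtain ⟨γ', hγ'p, hγ'c, hγ'cost⟩ := exists_coupling_lintegral_lt (htight n) (htight (nk j))
    (hconcμ n) (hconcμ (nk j)) hD hkantlt
  haveI := hγ'p
  set δ' : Measure (X × X) := γ'.map (Prod.map T' (Tk j)) with hδ'
  have hδ'c : IsCoupling δ' ν' (νd j) := map_prodmap_coupling hγ'c hT'm (hTkm j)
  set E : ℝ≥0∞ := ENNReal.ofReal (ε / 8) with hE
  have hEpow : ENNReal.ofReal ((1/2 : ℝ) ^ j) ≤ E := ENNReal.ofReal_le_ofReal hjpow.le
  have hδ'cost : ∫⁻ p, edist p.1 p.2 ∂δ' ≤ (E + E) + E := by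
    refine le_trans (cost_map_prodmap hγ'c hT'm (hTkm j) hT'r (hTkr j)) ?_
    exact add_le_add (add_le_add hT'cost (le_trans hγ'cost hEpow)) (le_trans (hTkcost j) hEpow)
  -- glue
  haveI := hνdprob j
  haveI : IsProbabilityMeasure δ' := prob_of_coupling hδ'c
  haveI := hβprob j
  obtain ⟨l1, hl1c, hl1cost⟩ := glue_atomic (Fk j) (hνdsupp j) hδ'c (hβc j)
  haveI : IsProbabilityMeasure l1 := prob_of_coupling hl1c
  haveI : IsProbabilityMeasure ((μ n).map (fun x => (x, T' x))) := prob_of_coupling hαc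
  obtain ⟨l2, hl2c, hl2cost⟩ := glue_atomic F' hν'supp hαc hl1c
  -- total cost bound
  have htotal : ∫⁻ p, edist p.1 p.2 ∂l2 ≤ E + (((E + E) + E) + E) := by
    refine le_trans hl2cost ?_
    refine add_le_add (le_trans hαcost hT'cost) ?_
    refine le_trans hl1cost ?_
    exact add_le_add hδ'cost (le_trans (hβcost j) hjtail.le)
  -- conclude
  have hkant_le : kant (μ n) ν ≤ (∫⁻ p, edist p.1 p.2 ∂l2).toReal :=
    kant_le_cost (htight n) hνtight (hconcμ n) hνConc hl2c
  have hfin : E + (E + E + E + E) = ENNReal.ofReal (5 * (ε / 8)) := by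
    rw [hE]
    rw [show (5 : ℝ) * (ε / 8) = ε / 8 + (ε / 8 + ε / 8 + ε / 8 + ε / 8) by ring]
    rw [ENNReal.ofReal_add hε8.le (by positivity),
      ENNReal.ofReal_add (by positivity) hε8.le,
      ENNReal.ofReal_add (by positivity) hε8.le,
      ENNReal.ofReal_add hε8.le hε8.le]
  have hne : E + (E + E + E + E) ≠ ⊤ := by
    rw [hfin]
    exact ENNReal.ofReal_ne_top
  have hlast : (∫⁻ p, edist p.1 p.2 ∂l2).toReal ≤ 5 * (ε / 8) := by
    have h1 := ENNReal.toReal_mono hne htotal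
    rw [hfin, ENNReal.toReal_ofReal (by positivity)] at h1
    exact h1
  rw [Real.dist_0_eq_abs, abs_of_nonneg (kant_nonneg _ _)]
  calc kant (μ n) ν ≤ (∫⁻ p, edist p.1 p.2 ∂l2).toReal := hkant_le
    _ ≤ 5 * (ε / 8) := hlast
    _ < ε := by linarith
end
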